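/- arXiv:1308.3860 — 7 statements merged into one kernel-verified Lean document; each statement's English description precedes it below -/
import Mathlib

section
/- Let V = V^(1) ⊗ ⋯ ⊗ V^(d) be a tensor product of finite-dimensional complex Hilbert spaces and suppose a tensor T ∈ V has two diagonal singular value decompositions T = ∑_{i=1}^s λ_i w_i and T = ∑_{j=1}^r σ_j v_j, with λ_1 ≥ ⋯ ≥ λ_s > 0 and σ_1 ≥ ⋯ ≥ σ_r > 0. Then r = s and λ_i = σ_i for all i; i.e., the singular values of T are uniquely determined by T. -/
/-!
Pairing `T` with `wᵢ` gives `λᵢ = ⟨T, wᵢ⟩ ≤ ∑ⱼ σⱼ |⟨vⱼ, wᵢ⟩|`. Since both families are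
2-orthogonal tuples of pure unit tensors, the matrix `|⟨vⱼ, wᵢ⟩|` has row and column sums at most
`1`. Summing over `i < k` therefore bounds `λ₀ + ⋯ + λₖ₋₁` by a combination of the `σⱼ` with
weights in `[0, 1]` of total mass at most `k`, which is at most `σ₀ + ⋯ + σₖ₋₁` because `σ` is
decreasing. By symmetry the two sequences have equal partial sums, so they coincide and, being
positive, have the same length.
-/

noncomputable section

open Finset

abbrev TensorSpace {d : ℕ} (ι : Fin d → Type*) [∀ e, Fintype (ι e)] : Type _ :=
  EuclideanSpace ℂ (∀ e, ι e)

variable {d : ℕ} {ι : Fin d → Type*} [∀ e, Fintype (ι e)]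

/-- A pure tensor: `v⁽¹⁾ ⊗ ⋯ ⊗ v⁽ᵈ⁾`. -/
def IsPure (T : TensorSpace ι) : Prop :=
  ∃ v : ∀ e, ι e → ℂ, ∀ i : ∀ e, ι e, T i = ∏ e, v e (i e)

/-- Nuclear norm of a tensor. -/
def nuclearNorm (T : TensorSpace ι) : ℝ :=
  sInf {c : ℝ | ∃ (r : ℕ) (v : Fin r → TensorSpace ι),
    (∀ i, IsPure (v i)) ∧ T = ∑ i, v i ∧ c = ∑ i, ‖v i‖}

/-- `[S]_α`. -/
def bracket {κ : Type*} [Fintype κ] (S : κ → TensorSpace ι) (α : ℝ) : ℝ :=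
  sSup {c : ℝ | ∃ u : TensorSpace ι, IsPure u ∧ ‖u‖ = 1 ∧
    c = (∑ i, ‖(inner ℂ (S i) u : ℂ)‖ ^ α) ^ (1 / α)}

/-- The spectral norm `[T]`. -/
def tensorSpectralNorm (T : TensorSpace ι) : ℝ :=
  sSup {c : ℝ | ∃ u : TensorSpace ι, IsPure u ∧ ‖u‖ = 1 ∧ c = ‖(inner ℂ T u : ℂ)‖}

/-- `t`-orthogonality of a tuple of unit tensors. -/
def TOrthogonal {κ : Type*} [Fintype κ] (S : κ → TensorSpace ι) (t : ℝ) : Prop :=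
  (∀ i, ‖S i‖ = 1) ∧ bracket S (2 / t) = 1

/-- Diagonal singular value decomposition. -/
def IsDSVD {r : ℕ} (T : TensorSpace ι) (σ : Fin r → ℝ) (v : Fin r → TensorSpace ι) : Prop :=
  (∀ i j : Fin r, i ≤ j → σ j ≤ σ i) ∧ (∀ i, 0 < σ i) ∧ (∀ i, IsPure (v i)) ∧
    TOrthogonal v 2 ∧ T = ∑ i, (σ i : ℂ) • v i

/-- `μ_α`. -/
def mu {κ : Type*} [Fintype κ] [DecidableEq κ] (v : κ → TensorSpace ι) (α : ℝ) : ℝ :=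
  sSup {c : ℝ | ∃ i, c = (∑ j ∈ univ.erase i, ‖(inner ℂ (v i) (v j) : ℂ)‖ ^ α) ^ (1 / α)}

lemma sum_mul_le_sum_of_threshold {κ : Type*} [Fintype κ] {σ c : κ → ℝ} {J : Finset κ} {m : ℝ}
    (hm : 0 ≤ m) (hJ : ∀ j ∈ J, m ≤ σ j) (hJc : ∀ j ∉ J, σ j ≤ m)
    (hc0 : ∀ j, 0 ≤ c j) (hc1 : ∀ j, c j ≤ 1) (hcJ : ∑ j, c j ≤ #J) :
    ∑ j, σ j * c j ≤ ∑ j ∈ J, σ j := by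
  classical
  have hpoint : ∀ j, σ j * c j - m * c j ≤ if j ∈ J then σ j - m else 0 := by
    intro j
    split_ifs with hj
    · nlinarith [hJ j hj, hc1 j]
    · nlinarith [hJc j hj, hc0 j]
  have hsum := Finset.sum_le_sum fun j (_ : j ∈ univ) => hpoint j
  rw [Finset.sum_ite_mem_eq, Finset.sum_sub_distrib, Finset.sum_sub_distrib, ← Finset.mul_sum,
    Finset.sum_const, nsmul_eq_mul] at hsum
  nlinarith

def prefixSum {r : ℕ} (σ : Fin r → ℝ) (k : ℕ) : ℝ :=
  ∑ j ∈ ({j : Fin r | (j : ℕ) < k} : Finset (Fin r)), σ j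

lemma prefixSum_succ {r : ℕ} (σ : Fin r → ℝ) (k : ℕ) :
    prefixSum σ (k + 1) = prefixSum σ k + if h : k < r then σ ⟨k, h⟩ else 0 := by
  unfold prefixSum
  split_ifs with h
  · have : univ.filter (fun j : Fin r => (j : ℕ) < k + 1) =
        insert ⟨k, h⟩ (univ.filter fun j : Fin r => (j : ℕ) < k) := by
      ext j; simp [Fin.ext_iff]; omega
    rw [this, Finset.sum_insert (by simp), add_comm]
  · have : univ.filter (fun j : Fin r => (j : ℕ) < k + 1) =
        univ.filter fun j : Fin r => (j : ℕ) < k := by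
      ext j; simp; omega
    rw [this, add_zero]

/-- Threshold `m = σ (k - 1)`, or `0` once `k > r`; for `k = 0` the truncated `k - 1 = 0` gives
`σ 0`, which dominates every entry as required. -/
lemma sum_mul_le_prefixSum {r : ℕ} {σ c : Fin r → ℝ} (hσ : Antitone σ) (hσ0 : ∀ j, 0 ≤ σ j)
    (hc0 : ∀ j, 0 ≤ c j) (hc1 : ∀ j, c j ≤ 1) {k : ℕ} (hck : ∑ j, c j ≤ k) :
    ∑ j, σ j * c j ≤ prefixSum σ k := by
  set m : ℝ := if h : k - 1 < r then σ ⟨k - 1, h⟩ else 0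
  have hm : 0 ≤ m := by unfold m; split_ifs <;> simp [hσ0]
  unfold prefixSum
  refine sum_mul_le_sum_of_threshold hm (fun j hj => ?_) (fun j hj => ?_) hc0 hc1 ?_
  · have hj : (j : ℕ) < k := by simpa using hj
    unfold m; split_ifs with h
    · exact hσ (Fin.le_def.mpr (by simp; omega))
    · exact hσ0 j
  · have hj : k ≤ (j : ℕ) := by simpa using hj
    have h : k - 1 < r := by omega
    simp only [m, h, dite_true]
    exact hσ (Fin.le_def.mpr (by simp; omega))
  · have hcr : ∑ j, c j ≤ r := by
      simpa using Finset.sum_le_sum fun j (_ : j ∈ univ) => hc1 j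
    rw [Fin.card_filter_val_lt, Nat.cast_min]
    exact le_min hcr hck

lemma eq_of_prefixSum_eq {s r : ℕ} {lam : Fin s → ℝ} {sig : Fin r → ℝ}
    (hlam : ∀ i, lam i ≠ 0) (hsig : ∀ j, sig j ≠ 0) (h : ∀ k, prefixSum lam k = prefixSum sig k) :
    s = r ∧ ∀ (i : Fin s) (j : Fin r), (i : ℕ) = (j : ℕ) → lam i = sig j := by
  have hterm : ∀ k,
      (if h : k < s then lam ⟨k, h⟩ else 0) = if h : k < r then sig ⟨k, h⟩ else 0 := by
    intro k
    have := h (k + 1)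
    rw [prefixSum_succ, prefixSum_succ, h k] at this
    linarith
  have hsr : s = r := by
    by_contra hne
    rcases Nat.lt_or_gt_of_ne hne with hlt | hlt
    · exact hsig _ (by simpa [hlt] using (hterm s).symm)
    · exact hlam _ (by simpa [hlt] using hterm r)
  subst hsr
  refine ⟨rfl, fun i j hij => ?_⟩
  obtain rfl : i = j := Fin.ext hij
  simpa using hterm i

namespace TOrthogonal

variable {κ : Type*} [Fintype κ] {v : κ → TensorSpace ι}

lemma sum_norm_inner_le_one (hv : TOrthogonal v 2) {u : TensorSpace ι} (hu : IsPure u)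
    (hu1 : ‖u‖ = 1) : ∑ i, ‖(inner ℂ (v i) u : ℂ)‖ ≤ 1 := by
  obtain ⟨hv1, hbr⟩ := hv
  rw [div_self two_ne_zero, bracket] at hbr
  refine hbr ▸ le_csSup ⟨∑ _i : κ, (1 : ℝ), ?_⟩ ⟨u, hu, hu1, by simp⟩
  rintro c ⟨u', -, hu'1, rfl⟩
  simp only [Real.rpow_one, div_one]
  exact Finset.sum_le_sum fun i _ =>
    (norm_inner_le_norm (𝕜 := ℂ) (v i) u').trans_eq (by rw [hv1 i, hu'1, one_mul])

lemma inner_eq_zero (hv : TOrthogonal v 2) {i j : κ} (hj : IsPure (v j)) (hij : i ≠ j) :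
    (inner ℂ (v i) (v j) : ℂ) = 0 := by
  classical
  have hjj : ‖(inner ℂ (v j) (v j) : ℂ)‖ = 1 := by
    rw [inner_self_eq_norm_sq_to_K, hv.1 j]; simp
  have hpair : ∑ x ∈ {i, j}, ‖(inner ℂ (v x) (v j) : ℂ)‖ ≤ 1 :=
    (Finset.sum_le_univ_sum_of_nonneg fun _ => norm_nonneg _).trans
      (hv.sum_norm_inner_le_one hj (hv.1 j))
  rw [Finset.sum_pair hij, hjj] at hpair
  exact norm_le_zero_iff.mp (by linarith)

end TOrthogonal

namespace IsDSVD

variable {r s : ℕ} {T : TensorSpace ι} {σ : Fin r → ℝ} {v : Fin r → TensorSpace ι}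
  {lam : Fin s → ℝ} {w : Fin s → TensorSpace ι}

lemma inner_eq (hv : IsDSVD T σ v) (i : Fin r) : (inner ℂ T (v i) : ℂ) = σ i := by
  obtain ⟨-, -, hpure, horth, hT⟩ := hv
  rw [hT, sum_inner, Finset.sum_eq_single i]
  · rw [inner_smul_left, inner_self_eq_norm_sq_to_K, horth.1 i]; simp
  · intro j _ hji
    rw [inner_smul_left, horth.inner_eq_zero (hpure i) hji, mul_zero]
  · simp

lemma le_sum_mul_norm_inner (hw : IsDSVD T lam w) (hv : IsDSVD T σ v) (i : Fin s) :
    lam i ≤ ∑ j, σ j * ‖(inner ℂ (v j) (w i) : ℂ)‖ := by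
  have hlam : lam i = ‖(inner ℂ T (w i) : ℂ)‖ := by
    rw [hw.inner_eq, Complex.norm_real, Real.norm_of_nonneg (hw.2.1 i).le]
  calc lam i = ‖∑ j, (inner ℂ ((σ j : ℂ) • v j) (w i) : ℂ)‖ := by rw [hlam, hv.2.2.2.2, sum_inner]
    _ ≤ ∑ j, ‖(inner ℂ ((σ j : ℂ) • v j) (w i) : ℂ)‖ := norm_sum_le _ _
    _ = ∑ j, σ j * ‖(inner ℂ (v j) (w i) : ℂ)‖ := by
      refine Finset.sum_congr rfl fun j _ => ?_
      rw [inner_smul_left, norm_mul, Complex.conj_ofReal, Complex.norm_real,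
        Real.norm_of_nonneg (hv.2.1 j).le]

lemma prefixSum_le (hw : IsDSVD T lam w) (hv : IsDSVD T σ v) (k : ℕ) :
    prefixSum lam k ≤ prefixSum σ k := by
  have ⟨_, _, hw_pure, hw_orth, _⟩ := hw
  have ⟨hσ, hσ_pos, hv_pure, hv_orth, _⟩ := hv
  set I : Finset (Fin s) := {i : Fin s | (i : ℕ) < k}
  set c : Fin r → ℝ := fun j => ∑ i ∈ I, ‖(inner ℂ (v j) (w i) : ℂ)‖
  have hc0 : ∀ j, 0 ≤ c j := fun j => Finset.sum_nonneg fun _ _ => norm_nonneg _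
  have hc1 : ∀ j, c j ≤ 1 := fun j => calc
    c j = ∑ i ∈ I, ‖(inner ℂ (w i) (v j) : ℂ)‖ :=
      Finset.sum_congr rfl fun i _ => norm_inner_symm _ _
    _ ≤ ∑ i, ‖(inner ℂ (w i) (v j) : ℂ)‖ :=
      Finset.sum_le_univ_sum_of_nonneg fun _ => norm_nonneg _
    _ ≤ 1 := hw_orth.sum_norm_inner_le_one (hv_pure j) (hv_orth.1 j)
  have hck : ∑ j, c j ≤ k := calc
    ∑ j, c j = ∑ i ∈ I, ∑ j, ‖(inner ℂ (v j) (w i) : ℂ)‖ := Finset.sum_comm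
    _ ≤ ∑ _i ∈ I, (1 : ℝ) := Finset.sum_le_sum fun i _ =>
      hv_orth.sum_norm_inner_le_one (hw_pure i) (hw_orth.1 i)
    _ ≤ k := by
      rw [Finset.sum_const, nsmul_one, Fin.card_filter_val_lt, Nat.cast_le]
      exact min_le_right _ _
  calc prefixSum lam k ≤ ∑ i ∈ I, ∑ j, σ j * ‖(inner ℂ (v j) (w i) : ℂ)‖ :=
        Finset.sum_le_sum fun i _ => hw.le_sum_mul_norm_inner hv i
    _ = ∑ j, σ j * c j := by
        rw [Finset.sum_comm]; simp only [c, Finset.mul_sum]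
    _ ≤ prefixSum σ k := sum_mul_le_prefixSum hσ (fun j => (hσ_pos j).le) hc0 hc1 hck

end IsDSVD

/-- **Theorem 1.4 (Uniqueness of singular values).** If a tensor `T` has two diagonal
singular value decompositions `T = ∑ᵢ λᵢ wᵢ` and `T = ∑ⱼ σⱼ vⱼ`, then `r = s` and
`λᵢ = σᵢ` for all `i`. -/
theorem dsvd_singular_values_unique {d s r : ℕ} {ι : Fin d → Type*} [∀ e, Fintype (ι e)]
    (T : TensorSpace ι) (lam : Fin s → ℝ) (w : Fin s → TensorSpace ι)
    (sig : Fin r → ℝ) (v : Fin r → TensorSpace ι)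
    (hw : IsDSVD T lam w) (hv : IsDSVD T sig v) :
    s = r ∧ ∀ (i : Fin s) (j : Fin r), (i : ℕ) = (j : ℕ) → lam i = sig j :=
  eq_of_prefixSum_eq (fun i => (hw.2.1 i).ne') (fun j => (hv.2.1 j).ne') fun k =>
    le_antisymm (hw.prefixSum_le hv k) (hv.prefixSum_le hw k)
end
end

section
/- Let V = V^(1) ⊗ ⋯ ⊗ V^(d) be a tensor product of finite-dimensional complex Hilbert spaces and suppose T = ∑_{i=1}^r σ_i v_i is a diagonal singular value decomposition of T such that the tuple (v_1,…,v_r) is t-orthogonal for some t > 2. Then the diagonal singular value decomposition of T is unique up to reordering: for any other DSVD T = ∑_{i=1}^r σ_i w_i, the list (σ_1 w_1,…,σ_r w_r) is a permutation of (σ_1 v_1,…,σ_r v_r). -/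
noncomputable section

open Finset

variable {d : ℕ} {ι : Fin d → Type*} [∀ e, Fintype (ι e)]

/-! Both tuples are orthonormal, being 2-orthogonal tuples of pure unit tensors. Put
`a i j = ‖⟪v i, w j⟫‖` and `s = 2 / t < 1`. Pairing `T` with `v i` gives `σ i ≤ ∑ j, a i j * σ j`,
and `t`-orthogonality of `v` tested on `w j` gives `∑ i, a i j ≤ ∑ i, a i j ^ s ≤ 1`; summing the
first inequality over `i` then forces every column sum to be `1`. A column of numbers in `[0, 1]`
with `∑ a = 1 ≥ ∑ a ^ s` must contain a `1`, so `w j` is a unimodular multiple of some `v i`, and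
comparing `⟪w j, T⟫ = σ j` with `⟪v i, T⟫ = σ i` shows that the multiple is `1` and `σ i = σ j`. -/

open scoped InnerProductSpace

lemma sum_norm_inner_rpow_le_one_of_bracket_eq_one {κ : Type*} [Fintype κ]
    {S : κ → TensorSpace ι} {α : ℝ} (hα : 0 < α) (hS : bracket S α = 1)
    {u : TensorSpace ι} (hu : IsPure u) (hnu : ‖u‖ = 1) :
    ∑ i, ‖⟪S i, u⟫_ℂ‖ ^ α ≤ 1 := by
  have hbdd : BddAbove {c : ℝ | ∃ u : TensorSpace ι, IsPure u ∧ ‖u‖ = 1 ∧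
      c = (∑ i, ‖⟪S i, u⟫_ℂ‖ ^ α) ^ (1 / α)} := by
    by_contra h
    rw [bracket, Real.sSup_of_not_bddAbove h] at hS
    exact zero_ne_one hS
  have hle := le_csSup hbdd ⟨u, hu, hnu, rfl⟩
  rw [← bracket, hS] at hle
  by_contra! hgt
  exact hle.not_gt (Real.one_lt_rpow hgt (by positivity))

theorem TOrthogonal.orthonormal {κ : Type*} [Fintype κ] {S : κ → TensorSpace ι}
    (hS : TOrthogonal S 2) (hpure : ∀ i, IsPure (S i)) : Orthonormal ℂ S := by
  classical
  refine ⟨hS.1, fun i j hij => norm_eq_zero.1 (le_antisymm ?_ (norm_nonneg _))⟩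
  have hsum := sum_norm_inner_rpow_le_one_of_bracket_eq_one one_pos
    (by simpa using hS.2) (hpure j) (hS.1 j)
  simp only [Real.rpow_one] at hsum
  have hjj : ‖⟪S j, S j⟫_ℂ‖ = 1 := by simp [inner_self_eq_norm_sq_to_K, hS.1 j]
  have hi : ‖⟪S i, S j⟫_ℂ‖ ≤ ∑ k ∈ univ.erase j, ‖⟪S k, S j⟫_ℂ‖ :=
    single_le_sum (f := fun k => ‖⟪S k, S j⟫_ℂ‖) (fun k _ => norm_nonneg _)
      (mem_erase.2 ⟨hij, mem_univ i⟩)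
  rw [← add_sum_erase _ _ (mem_univ j), hjj] at hsum
  linarith

lemma sum_eq_one_of_le_sum_mul {κ : Type*} [Fintype κ] {σ : κ → ℝ} {a : κ → κ → ℝ}
    (hσ : ∀ j, 0 < σ j) (hcol : ∀ j, ∑ i, a i j ≤ 1) (h : ∀ i, σ i ≤ ∑ j, a i j * σ j)
    (j : κ) : ∑ i, a i j = 1 := by
  have hdefect : ∑ j, (1 - ∑ i, a i j) * σ j ≤ 0 := by
    calc ∑ j, (1 - ∑ i, a i j) * σ j = ∑ j, σ j - ∑ i, ∑ j, a i j * σ j := by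
          simp only [sub_mul, one_mul, sum_sub_distrib, sum_mul]
          rw [sum_comm]
      _ ≤ 0 := sub_nonpos.2 (sum_le_sum fun i _ => h i)
  have hnonneg : ∀ j ∈ univ, 0 ≤ (1 - ∑ i, a i j) * σ j :=
    fun j _ => mul_nonneg (sub_nonneg.2 (hcol j)) (hσ j).le
  have hj := (sum_eq_zero_iff_of_nonneg hnonneg).1
    (le_antisymm hdefect (sum_nonneg hnonneg)) j (mem_univ j)
  have := (mul_eq_zero.1 hj).resolve_right (hσ j).ne'
  linarith

lemma exists_eq_one_of_sum_eq_one_of_sum_rpow_le_one {κ : Type*} [Fintype κ] {a : κ → ℝ}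
    {s : ℝ} (hs : s < 1) (ha : ∀ i, 0 ≤ a i) (hsum : ∑ i, a i = 1)
    (hsum_rpow : ∑ i, a i ^ s ≤ 1) : ∃ i, a i = 1 := by
  classical
  by_contra! hne
  have ha1 : ∀ i, a i < 1 := fun i =>
    (hsum ▸ single_le_sum (fun j _ => ha j) (mem_univ i)).lt_of_ne (hne i)
  obtain ⟨i, -, hi⟩ := exists_ne_zero_of_sum_ne_zero (hsum.trans_ne one_ne_zero)
  have hlt : ∑ i, a i < ∑ i, a i ^ s := by
    refine sum_lt_sum (fun j _ => Real.self_le_rpow_of_le_one (ha j) (ha1 j).le hs.le)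
      ⟨i, mem_univ i, ?_⟩
    simpa using Real.rpow_lt_rpow_of_exponent_gt ((ha i).lt_of_ne' hi) (ha1 i) hs
  linarith

lemma eq_of_norm_inner_eq_one {𝕜 E : Type*} [RCLike 𝕜] [NormedAddCommGroup E]
    [InnerProductSpace 𝕜 E] {x y z : E} {a b : ℝ} (hx : ‖x‖ = 1) (hy : ‖y‖ = 1)
    (hxy : ‖⟪x, y⟫_𝕜‖ = 1) (ha : 0 < a) (hb : 0 ≤ b) (hxz : ⟪x, z⟫_𝕜 = a)
    (hyz : ⟪y, z⟫_𝕜 = b) : y = x ∧ a = b := by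
  obtain ⟨r, -, rfl⟩ := (norm_inner_eq_norm_iff (𝕜 := 𝕜) (norm_ne_zero_iff.1 (hx ▸ one_ne_zero))
    (norm_ne_zero_iff.1 (hy ▸ one_ne_zero))).1 (by rw [hxy, hx, hy, one_mul])
  rw [inner_smul_left, hxz] at hyz
  have hr : ‖r‖ = 1 := by simpa [norm_smul, hx] using hy
  have hab : a = b := by
    have := congrArg norm hyz
    rwa [norm_mul, RCLike.norm_conj, hr, one_mul, RCLike.norm_ofReal, RCLike.norm_ofReal,
      abs_of_pos ha, abs_of_nonneg hb] at this
  subst hab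
  have hr1 : r = 1 := by
    simpa [ha.ne'] using congrArg (starRingEnd 𝕜) hyz
  exact ⟨by rw [hr1, one_smul], rfl⟩

lemma exists_eq_of_sum_smul_eq_sum_smul {𝕜 E κ : Type*} [RCLike 𝕜] [NormedAddCommGroup E]
    [InnerProductSpace 𝕜 E] [Fintype κ] {σ : κ → ℝ} {v w : κ → E} {s : ℝ}
    (hσ : ∀ i, 0 < σ i) (hv : Orthonormal 𝕜 v) (hw : Orthonormal 𝕜 w) (hs : s < 1)
    (hvw : ∀ j, ∑ i, ‖⟪v i, w j⟫_𝕜‖ ^ s ≤ 1)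
    (h : ∑ i, (σ i : 𝕜) • v i = ∑ i, (σ i : 𝕜) • w i) (j : κ) :
    ∃ i, w j = v i ∧ σ i = σ j := by
  set T := ∑ i, (σ i : 𝕜) • w i
  have hvT : ∀ i, ⟪v i, T⟫_𝕜 = σ i := fun i => h ▸ hv.inner_right_fintype _ i
  have hwT : ∀ j, ⟪w j, T⟫_𝕜 = σ j := fun j => hw.inner_right_fintype _ j
  have hle1 : ∀ i j, ‖⟪v i, w j⟫_𝕜‖ ≤ 1 := fun i j =>
    (norm_inner_le_norm _ _).trans (by rw [hv.1 i, hw.1 j, one_mul])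
  have hcol : ∀ j, ∑ i, ‖⟪v i, w j⟫_𝕜‖ ≤ 1 := fun j =>
    (sum_le_sum fun i _ => Real.self_le_rpow_of_le_one (norm_nonneg _) (hle1 i j) hs.le).trans
      (hvw j)
  have hrow : ∀ i, σ i ≤ ∑ j, ‖⟪v i, w j⟫_𝕜‖ * σ j := by
    intro i
    calc σ i = ‖⟪v i, T⟫_𝕜‖ := by rw [hvT, RCLike.norm_ofReal, abs_of_pos (hσ i)]
      _ = ‖∑ j, (σ j : 𝕜) * ⟪v i, w j⟫_𝕜‖ := by simp only [T, inner_sum, inner_smul_right]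
      _ ≤ ∑ j, ‖(σ j : 𝕜) * ⟪v i, w j⟫_𝕜‖ := norm_sum_le _ _
      _ = ∑ j, ‖⟪v i, w j⟫_𝕜‖ * σ j := sum_congr rfl fun j _ => by
        rw [norm_mul, RCLike.norm_ofReal, abs_of_pos (hσ j), mul_comm]
  obtain ⟨i, hi⟩ := exists_eq_one_of_sum_eq_one_of_sum_rpow_le_one hs
    (fun i => norm_nonneg _) (sum_eq_one_of_le_sum_mul hσ hcol hrow j) (hvw j)
  obtain ⟨hwv, hσij⟩ :=
    eq_of_norm_inner_eq_one (hv.1 i) (hw.1 j) hi (hσ i) (hσ j).le (hvT i) (hwT j)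
  exact ⟨i, hwv, hσij⟩

/-- **Theorem 1.7.** If `T = ∑ᵢ σᵢ vᵢ` is a diagonal singular value decomposition and
`(v₁, …, v_r)` is `t`-orthogonal for some `t > 2`, then the diagonal singular value
decomposition of `T` is unique: any other DSVD `T = ∑ᵢ σᵢ wᵢ` is a permutation of it. -/
theorem dsvd_unique_of_tOrthogonal {d r : ℕ} {ι : Fin d → Type*} [∀ e, Fintype (ι e)]
    (T : TensorSpace ι) (σ : Fin r → ℝ) (v w : Fin r → TensorSpace ι)
    (t : ℝ) (ht : 2 < t)
    (hv : IsDSVD T σ v) (hvt : TOrthogonal v t)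
    (hw : IsDSVD T σ w) :
    ∃ π : Equiv.Perm (Fin r), ∀ i, (σ i : ℂ) • w i = (σ (π i) : ℂ) • v (π i) := by
  obtain ⟨-, hσ, hvpure, hv2, hTv⟩ := hv
  obtain ⟨-, -, hwpure, hw2, hTw⟩ := hw
  have hwo := hw2.orthonormal hwpure
  have ht0 : 0 < t := by linarith
  have hvw : ∀ j, ∑ i, ‖⟪v i, w j⟫_ℂ‖ ^ (2 / t) ≤ 1 := fun j =>
    sum_norm_inner_rpow_le_one_of_bracket_eq_one (by positivity) hvt.2 (hwpure j) (hw2.1 j)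
  choose f hf using exists_eq_of_sum_smul_eq_sum_smul hσ (hv2.orthonormal hvpure) hwo
    ((div_lt_one ht0).2 ht) hvw (hTv.symm.trans hTw)
  have hf_inj : Function.Injective f := fun j j' hjj' =>
    hwo.linearIndependent.injective (by rw [(hf j).1, (hf j').1, hjj'])
  exact ⟨Equiv.ofBijective f hf_inj.bijective_of_finite, fun j => by simp [(hf j).1, (hf j).2]⟩
end
end

section
/- Let per_n = ∑_{σ ∈ S_n} e_{σ(1)} ⊗ e_{σ(2)} ⊗ ⋯ ⊗ e_{σ(n)} ∈ (ℂ^n)^{⊗n} be the permanent tensor. Then ‖per_n‖_⋆ = n^{n/2}. -/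
noncomputable section

open Finset

variable {d : ℕ} {ι : Fin d → Type*} [∀ e, Fintype (ι e)]

/-- The permanent tensor `per_n = ∑_{σ ∈ S_n} e_{σ(1)} ⊗ ⋯ ⊗ e_{σ(n)} ∈ (ℂⁿ)^{⊗n}`. -/
def perTensor (n : ℕ) : TensorSpace (fun _ : Fin n => Fin n) :=
  WithLp.toLp 2 (fun f => if Function.Bijective f then 1 else 0)

/-!
Upper bound. For `ε ∈ {±1}ⁿ`, `∑_ε ∏ᵢ εᵢ ε_{f i}` is `2ⁿ` if `f` is a bijection and `0` otherwise,
so `perₙ = ∑_ε ⊗ᵢ (εᵢ ε / 2)`: `2ⁿ` pure tensors of norm `(√n / 2)ⁿ`, of total norm `n^{n/2}`.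

Lower bound. For a pure tensor `u = a¹ ⊗ ⋯ ⊗ aⁿ`, `⟨perₙ, u⟩` is the permanent of the matrix with
rows `aⁱ`, so the permanent Hadamard inequality gives `|⟨perₙ, u⟩| ≤ n! / n^{n/2} ‖u‖`; since
`⟨perₙ, perₙ⟩ = n!`, every decomposition of `perₙ` into pure tensors has cost at least `n^{n/2}`.

The Hadamard inequality reduces to nonnegative matrices with unit rows. By compactness there is a
maximizer of the permanent, and among the maximizers one of largest entry sum. At a maximizer
each row is parallel to its cofactor vector, which makes replacing two distinct rows by their
normalized sum keep the permanent while increasing the entry sum. So all rows equal some unit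
vector `x`, and `per = n! ∏ₖ xₖ ≤ n! / n^{n/2}` by AM–GM.
-/

namespace Matrix

variable {m : Type*} [Fintype m] [DecidableEq m]

section CommSemiring

variable {R : Type*} [CommSemiring R]

theorem permanent_eq_sum_prod_apply (M : Matrix m m R) :
    M.permanent = ∑ σ : Equiv.Perm m, ∏ i, M i (σ i) := by
  rw [← permanent_transpose]; rfl

theorem permanent_updateRow (M : Matrix m m R) (j : m) (y : m → R) :
    (M.updateRow j y).permanent = ∑ σ : Equiv.Perm m, y (σ j) * ∏ i ∈ univ.erase j, M i (σ i) := by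
  rw [permanent_eq_sum_prod_apply]
  refine sum_congr rfl fun σ _ => ?_
  rw [← mul_prod_erase _ _ (mem_univ j), updateRow_self]
  congr 1
  exact prod_congr rfl fun i hi => by rw [updateRow_ne (ne_of_mem_erase hi)]

def permCofactor (M : Matrix m m R) (j : m) : m → R :=
  fun k => (M.updateRow j (Pi.single k 1)).permanent

theorem permanent_updateRow_eq_dotProduct (M : Matrix m m R) (j : m) (y : m → R) :
    (M.updateRow j y).permanent = y ⬝ᵥ M.permCofactor j := by
  simp only [dotProduct, permCofactor, permanent_updateRow, mul_sum, Pi.single_apply]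
  rw [sum_comm]
  refine sum_congr rfl fun σ _ => ?_
  simp [ite_mul]

theorem permanent_eq_dotProduct_permCofactor (M : Matrix m m R) (j : m) :
    M.permanent = M j ⬝ᵥ M.permCofactor j := by
  rw [← permanent_updateRow_eq_dotProduct, updateRow_eq_self]

theorem permanent_updateRow_add (M : Matrix m m R) (j : m) (y z : m → R) :
    (M.updateRow j (y + z)).permanent =
      (M.updateRow j y).permanent + (M.updateRow j z).permanent := by
  simp only [permanent_updateRow_eq_dotProduct, add_dotProduct]

theorem permanent_mul_rows (c : m → R) (M : Matrix m m R) :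
    (of fun i k => c i * M i k).permanent = (∏ i, c i) * M.permanent := by
  simp only [permanent_eq_sum_prod_apply, of_apply, prod_mul_distrib, mul_sum]

theorem permanent_of_const_rows (x : m → R) :
    (of fun _ : m => x).permanent = (Fintype.card m).factorial * ∏ k, x k := by
  simp only [permanent_eq_sum_prod_apply, of_apply, Equiv.prod_comp, sum_const, card_univ,
    Fintype.card_perm, nsmul_eq_mul]

theorem permanent_eq_zero_of_row_eq_zero {M : Matrix m m R} {i : m} (h : M i = 0) :
    M.permanent = 0 := by
  rw [← updateRow_eq_self M i, h, permanent_updateRow_eq_dotProduct, zero_dotProduct]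

end CommSemiring

theorem norm_permanent_le {R : Type*} [NormedCommRing R] [NormOneClass R] (M : Matrix m m R) :
    ‖M.permanent‖ ≤ (of fun i k => ‖M i k‖).permanent := by
  simp only [permanent_eq_sum_prod_apply, of_apply]
  exact (norm_sum_le _ _).trans (sum_le_sum fun σ _ => norm_prod_le _ _)

theorem sum_sum_updateRow {R : Type*} [AddCommGroup R] (N : Matrix m m R) (j : m) (y : m → R) :
    ∑ i, ∑ k, N.updateRow j y i k = ∑ i, ∑ k, N i k + ∑ k, (y k - N j k) := by
  have hrow : ∀ i, ∑ k, N.updateRow j y i k =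
      ∑ k, N i k + if i = j then ∑ k, (y k - N j k) else 0 := fun i => by
    rcases eq_or_ne i j with rfl | hij
    · simp [sum_sub_distrib]
    · simp [hij]
  simp only [hrow, sum_add_distrib, sum_ite_eq', mem_univ, if_true]

theorem sum_sum_updateRow_updateRow_smul_add {R : Type*} [CommRing R] (M : Matrix m m R)
    {i j : m} (hij : i ≠ j) (c : R) :
    ∑ a, ∑ k, (M.updateRow i (c • (M i + M j))).updateRow j (c • (M i + M j)) a k =
      ∑ a, ∑ k, M a k + (2 * c - 1) * ∑ k, (M i k + M j k) := by
  rw [sum_sum_updateRow, sum_sum_updateRow, updateRow_ne hij.symm, add_assoc, ← sum_add_distrib,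
    mul_sum]
  congr 1
  refine sum_congr rfl fun k _ => ?_
  simp only [Pi.smul_apply, Pi.add_apply, smul_eq_mul]
  ring

section Real

variable {M : Matrix m m ℝ}

theorem permanent_nonneg (hM : ∀ i k, 0 ≤ M i k) : 0 ≤ M.permanent := by
  rw [permanent_eq_sum_prod_apply]
  exact sum_nonneg fun σ _ => prod_nonneg fun i _ => hM i (σ i)

theorem permCofactor_nonneg (hM : ∀ i k, 0 ≤ M i k) (j : m) : 0 ≤ M.permCofactor j := by
  intro k
  refine permanent_nonneg fun i l => ?_
  rcases eq_or_ne i j with rfl | hij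
  · have : (0 : m → ℝ) ≤ Pi.single k 1 := Pi.single_nonneg.2 zero_le_one
    rw [updateRow_self]; exact this l
  · rw [updateRow_ne hij]; exact hM i l

theorem continuous_permanent : Continuous fun M : Matrix m m ℝ => M.permanent := by
  simp only [permanent_eq_sum_prod_apply]
  fun_prop

end Real

end Matrix

section NonnegUnitRows

open Matrix

variable {m : Type*} [Fintype m]

def nonnegUnitSphere (m : Type*) [Fintype m] : Set (m → ℝ) :=
  {x | 0 ≤ x ∧ ‖WithLp.toLp 2 x‖ = 1}

theorem isCompact_nonnegUnitSphere : IsCompact (nonnegUnitSphere m) := by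
  have hsphere : IsCompact {x : m → ℝ | ‖WithLp.toLp 2 x‖ = 1} := by
    convert (PiLp.homeomorph 2 fun _ : m => ℝ).symm.isCompact_preimage.2
      (isCompact_sphere (0 : EuclideanSpace ℝ m) 1) using 1
    ext x
    simp [PiLp.homeomorph]
  exact hsphere.inter_left isClosed_Ici

theorem single_mem_nonnegUnitSphere [DecidableEq m] (k : m) : Pi.single k 1 ∈ nonnegUnitSphere m :=
  ⟨Pi.single_nonneg.2 zero_le_one, by simp⟩

theorem sum_pos_of_mem_nonnegUnitSphere {x : m → ℝ} (hx : x ∈ nonnegUnitSphere m) :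
    0 < ∑ k, x k := by
  have hx0 : x ≠ 0 := by
    rintro rfl
    simp [nonnegUnitSphere] at hx
  obtain ⟨k, hk⟩ := Function.ne_iff.1 hx0
  exact sum_pos' (fun k _ => hx.1 k) ⟨k, mem_univ k, lt_of_le_of_ne (hx.1 k) (Ne.symm hk)⟩

theorem dotProduct_eq_inner_toLp (x y : m → ℝ) :
    x ⬝ᵥ y = inner ℝ (WithLp.toLp 2 x) (WithLp.toLp 2 y) := by
  simp [EuclideanSpace.inner_toLp_toLp, dotProduct_comm]

theorem eq_smul_of_isMaxOn_dotProduct {x w : m → ℝ} (hw : 0 ≤ w) (hx : x ∈ nonnegUnitSphere m)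
    (hmax : IsMaxOn (· ⬝ᵥ w) (nonnegUnitSphere m) x) : w = (x ⬝ᵥ w) • x := by
  set W : EuclideanSpace ℝ m := WithLp.toLp 2 w
  rcases eq_or_ne W 0 with hW | hW
  · have : w = 0 := by simpa [W] using hW
    simp [this]
  have hmem : ‖W‖⁻¹ • w ∈ nonnegUnitSphere m :=
    ⟨smul_nonneg (inv_nonneg.2 (norm_nonneg _)) hw, by
      simpa [W, WithLp.toLp_smul] using norm_smul_inv_norm (𝕜 := ℝ) hW⟩
  have hle : ‖W‖ ≤ x ⬝ᵥ w := by
    have hself : w ⬝ᵥ w = ‖W‖ ^ 2 := by rw [dotProduct_eq_inner_toLp, real_inner_self_eq_norm_sq]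
    have : (‖W‖⁻¹ • w) ⬝ᵥ w ≤ x ⬝ᵥ w := hmax hmem
    rwa [smul_dotProduct, hself, smul_eq_mul, sq, inv_mul_cancel_left₀
      (norm_ne_zero_iff.2 hW)] at this
  have hX : ‖(WithLp.toLp 2 x : EuclideanSpace ℝ m)‖ = 1 := hx.2
  have hinner : x ⬝ᵥ w = ‖W‖ := by
    refine le_antisymm ?_ hle
    simpa [dotProduct_eq_inner_toLp, hX] using real_inner_le_norm (WithLp.toLp 2 x) W
  have hcs := inner_eq_norm_mul_iff_real.1
    (show inner ℝ (WithLp.toLp 2 x : EuclideanSpace ℝ m) W = _ * ‖W‖ by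
      rw [← dotProduct_eq_inner_toLp, hX, one_mul, hinner])
  rw [hX, one_smul, ← hinner] at hcs
  exact (WithLp.toLp_injective 2 (by simpa [W] using hcs)).symm

theorem sqrt_card_pow_mul_prod_le_one {x : m → ℝ} (hx : x ∈ nonnegUnitSphere m) :
    √(Fintype.card m) ^ Fintype.card m * ∏ k, x k ≤ 1 := by
  set n := Fintype.card m
  rcases Nat.eq_zero_or_pos n with hn | hn
  · simp [n, Fintype.card_eq_zero_iff.1 hn]
  have hn' : (0 : ℝ) < n := Nat.cast_pos.2 hn
  have hsq : ∑ k, x k ^ 2 = 1 := by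
    simpa [hx.2] using (EuclideanSpace.real_norm_sq_eq (WithLp.toLp 2 x)).symm
  have hamgm := Real.geom_mean_le_arith_mean_weighted univ (fun _ => (n : ℝ)⁻¹)
    (fun k => n * x k ^ 2) (fun _ _ => by positivity) (by simp [n, hn'.ne'])
    (fun _ _ => by positivity)
  rw [Real.finsetProd_rpow _ _ (fun _ _ => by positivity), ← mul_sum, ← mul_sum, hsq, mul_one,
    inv_mul_cancel₀ hn'.ne'] at hamgm
  have hprod : ∏ k, ((n : ℝ) * x k ^ 2) = (√n ^ n * ∏ k, x k) ^ 2 := by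
    rw [prod_mul_distrib, prod_const, card_univ, mul_pow, ← pow_mul, mul_comm n 2, pow_mul,
      Real.sq_sqrt hn'.le, prod_pow]
  have hle : (√n ^ n * ∏ k, x k) ^ 2 ≤ 1 := by
    rw [← hprod, ← Real.rpow_inv_natCast_pow (prod_nonneg fun _ _ => by positivity) hn.ne']
    exact pow_le_one₀ (by positivity) (by simpa using hamgm)
  have : 0 ≤ √n ^ n * ∏ k, x k := mul_nonneg (by positivity) (prod_nonneg fun k _ => hx.1 k)
  nlinarith

def nonnegUnitRows (m : Type*) [Fintype m] : Set (Matrix m m ℝ) :=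
  {M | ∀ i, M i ∈ nonnegUnitSphere m}

theorem isCompact_nonnegUnitRows : IsCompact (nonnegUnitRows m) := by
  have := isCompact_univ_pi fun _ : m => isCompact_nonnegUnitSphere (m := m)
  simp only [Set.pi, Set.mem_univ, true_imp_iff] at this
  exact this

variable [DecidableEq m]

theorem updateRow_mem_nonnegUnitRows {M : Matrix m m ℝ} (hM : M ∈ nonnegUnitRows m) (j : m)
    {y : m → ℝ} (hy : y ∈ nonnegUnitSphere m) : M.updateRow j y ∈ nonnegUnitRows m := by
  intro i
  rcases eq_or_ne i j with rfl | hij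
  · rwa [updateRow_self]
  · rw [updateRow_ne hij]; exact hM i

theorem permCofactor_eq_smul_of_isMaxOn {M : Matrix m m ℝ} (hM : M ∈ nonnegUnitRows m)
    (hmax : IsMaxOn permanent (nonnegUnitRows m) M) (j : m) :
    M.permCofactor j = M.permanent • M j := by
  rw [permanent_eq_dotProduct_permCofactor M j]
  refine eq_smul_of_isMaxOn_dotProduct
    (permCofactor_nonneg (fun i k => (hM i).1 k) j) (hM j) fun y hy => ?_
  show y ⬝ᵥ _ ≤ M j ⬝ᵥ _
  rw [← permanent_updateRow_eq_dotProduct, ← permanent_updateRow_eq_dotProduct, updateRow_eq_self]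
  exact hmax (updateRow_mem_nonnegUnitRows hM j hy)

theorem permanent_updateRow_updateRow_smul_add {M : Matrix m m ℝ} (hM : M ∈ nonnegUnitRows m)
    (hmax : IsMaxOn permanent (nonnegUnitRows m) M) {i j : m} (hij : i ≠ j) (c : ℝ) :
    ((M.updateRow i (c • (M i + M j))).updateRow j (c • (M i + M j))).permanent =
      c ^ 2 * ‖WithLp.toLp 2 (M i + M j)‖ ^ 2 * M.permanent := by
  set B : (m → ℝ) → (m → ℝ) → ℝ := fun x y => ((M.updateRow i x).updateRow j y).permanent
  have hB : ∀ x y, B x y = ((M.updateRow j y).updateRow i x).permanent := fun x y => by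
    simp only [B, updateRow_comm M hij]
  have hxy : B (M i) (M j) = M.permanent := by simp only [B, updateRow_eq_self]
  have hyx : B (M j) (M i) = M.permanent := by
    have : (M.updateRow i (M j)).updateRow j (M i) = M.submatrix (Equiv.swap i j) id := by
      ext a k
      rcases eq_or_ne a j with rfl | haj
      · simp
      rcases eq_or_ne a i with rfl | hai
      · simp [updateRow_ne haj]
      · simp [updateRow_ne haj, updateRow_ne hai, Equiv.swap_apply_of_ne_of_ne hai haj]
    simp only [B, this, permanent_permute_cols]
  have hxx : B (M i) (M i) = M.permanent * (M i ⬝ᵥ M j) := by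
    simp only [B, updateRow_eq_self, permanent_updateRow_eq_dotProduct,
      permCofactor_eq_smul_of_isMaxOn hM hmax, dotProduct_smul, smul_eq_mul]
  have hyy : B (M j) (M j) = M.permanent * (M i ⬝ᵥ M j) := by
    simp only [hB, updateRow_eq_self, permanent_updateRow_eq_dotProduct,
      permCofactor_eq_smul_of_isMaxOn hM hmax, dotProduct_smul, smul_eq_mul, dotProduct_comm]
  have hnorm : ‖WithLp.toLp 2 (M i + M j)‖ ^ 2 = 2 + 2 * (M i ⬝ᵥ M j) := by
    rw [WithLp.toLp_add, norm_add_sq_real, ← dotProduct_eq_inner_toLp, (hM i).2, (hM j).2]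
    ring
  have hright : ∀ x y z, B x (c • (y + z)) = c * (B x y + B x z) := fun x y z => by
    simp only [B, permanent_updateRow_smul, permanent_updateRow_add]
  have hleft : ∀ x y z, B (c • (x + y)) z = c * (B x z + B y z) := fun x y z => by
    simp only [hB, permanent_updateRow_smul, permanent_updateRow_add]
  change B _ _ = _
  rw [hright, hleft, hleft, hxx, hxy, hyx, hyy, hnorm]
  ring

theorem rows_eq_of_isMaxOn {M : Matrix m m ℝ} (hM : M ∈ nonnegUnitRows m)
    (hmax : IsMaxOn permanent (nonnegUnitRows m) M)
    (hsum : IsMaxOn (fun N : Matrix m m ℝ => ∑ i, ∑ k, N i k)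
      (nonnegUnitRows m ∩ {N | N.permanent = M.permanent}) M) (i j : m) : M i = M j := by
  by_contra hne
  have hij : i ≠ j := fun h => hne (h ▸ rfl)
  set s : EuclideanSpace ℝ m := WithLp.toLp 2 (M i + M j)
  have hs_lt : ‖s‖ < 2 := by
    have := norm_add_lt_of_not_sameRay
      ((not_sameRay_iff_of_norm_eq ((hM i).2.trans (hM j).2.symm)).2
        fun h => hne (WithLp.toLp_injective 2 h))
    rwa [(hM i).2, (hM j).2, one_add_one_eq_two, ← WithLp.toLp_add] at this
  have hsum_pos : 0 < ∑ k, (M i k + M j k) := by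
    rw [sum_add_distrib]
    exact add_pos (sum_pos_of_mem_nonnegUnitSphere (hM i)) (sum_pos_of_mem_nonnegUnitSphere (hM j))
  have hs0 : s ≠ 0 := by
    intro h
    have : M i + M j = 0 := WithLp.toLp_injective 2 h
    simp [← Pi.add_apply, this] at hsum_pos
  set u := ‖s‖⁻¹ • (M i + M j)
  have hu : u ∈ nonnegUnitSphere m :=
    ⟨smul_nonneg (inv_nonneg.2 (norm_nonneg _)) (add_nonneg (hM i).1 (hM j).1), by
      simpa [u, s, WithLp.toLp_smul] using norm_smul_inv_norm (𝕜 := ℝ) hs0⟩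
  set M' := (M.updateRow i u).updateRow j u
  have hM' : M' ∈ nonnegUnitRows m :=
    updateRow_mem_nonnegUnitRows (updateRow_mem_nonnegUnitRows hM i hu) j hu
  have hper : M'.permanent = M.permanent := by
    rw [permanent_updateRow_updateRow_smul_add hM hmax hij, inv_pow,
      inv_mul_cancel₀ (pow_ne_zero 2 (norm_ne_zero_iff.2 hs0)), one_mul]
  have hcoef : 0 < 2 * ‖s‖⁻¹ - 1 := by
    have := (one_lt_div (norm_pos_iff.2 hs0)).2 hs_lt
    rw [div_eq_mul_inv] at this
    linarith
  have hlt : ∑ i, ∑ k, M i k < ∑ i, ∑ k, M' i k := by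
    rw [sum_sum_updateRow_updateRow_smul_add M hij]
    exact lt_add_of_pos_right _ (mul_pos hcoef hsum_pos)
  exact (hsum ⟨hM', hper⟩).not_gt hlt

theorem exists_const_rows_isMaxOn_permanent [Nonempty m] :
    ∃ x ∈ nonnegUnitSphere m, IsMaxOn permanent (nonnegUnitRows m) (of fun _ => x) := by
  obtain ⟨i₀⟩ := ‹Nonempty m›
  obtain ⟨M₁, hM₁, hmax₁⟩ := isCompact_nonnegUnitRows.exists_isMaxOn
    ⟨of fun _ => Pi.single i₀ 1, fun _ => single_mem_nonnegUnitSphere i₀⟩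
    continuous_permanent.continuousOn
  obtain ⟨M, ⟨hM, hMM₁⟩, hsum⟩ :=
    (isCompact_nonnegUnitRows.inter_right
      (isClosed_eq continuous_permanent continuous_const)).exists_isMaxOn ⟨M₁, hM₁, rfl⟩
      (by fun_prop : Continuous fun N : Matrix m m ℝ => ∑ i, ∑ k, N i k).continuousOn
  have hmax : IsMaxOn permanent (nonnegUnitRows m) M := fun N hN =>
    (hmax₁ hN : _ ≤ _).trans hMM₁.ge
  rw [← hMM₁] at hsum
  refine ⟨M i₀, hM i₀, ?_⟩
  convert hmax
  ext i k
  rw [of_apply, rows_eq_of_isMaxOn hM hmax hsum i i₀]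

theorem sqrt_card_pow_mul_permanent_le {M : Matrix m m ℝ} (hM : M ∈ nonnegUnitRows m) :
    √(Fintype.card m) ^ Fintype.card m * M.permanent ≤ (Fintype.card m).factorial := by
  rcases isEmpty_or_nonempty m with hm | hm
  · simp [permanent_isEmpty]
  obtain ⟨x, hx, hmax⟩ := exists_const_rows_isMaxOn_permanent (m := m)
  calc √(Fintype.card m) ^ Fintype.card m * M.permanent
      ≤ √(Fintype.card m) ^ Fintype.card m * (of fun _ => x).permanent :=
        mul_le_mul_of_nonneg_left (hmax hM) (by positivity)
    _ = (Fintype.card m).factorial * (√(Fintype.card m) ^ Fintype.card m * ∏ k, x k) := by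
        rw [permanent_of_const_rows]; ring
    _ ≤ (Fintype.card m).factorial := by
        simpa using mul_le_mul_of_nonneg_left (sqrt_card_pow_mul_prod_le_one hx)
          (Nat.cast_nonneg (α := ℝ) (Fintype.card m).factorial)

theorem sqrt_card_pow_mul_permanent_le_prod_norm {M : Matrix m m ℝ} (hM : ∀ i k, 0 ≤ M i k) :
    √(Fintype.card m) ^ Fintype.card m * M.permanent ≤
      (Fintype.card m).factorial * ∏ i, ‖(WithLp.toLp 2 (M i) : EuclideanSpace ℝ m)‖ := by
  set ν : m → ℝ := fun i => ‖(WithLp.toLp 2 (M i) : EuclideanSpace ℝ m)‖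
  by_cases hν : ∃ i, ν i = 0
  · obtain ⟨i, hi⟩ := hν
    rw [permanent_eq_zero_of_row_eq_zero (WithLp.toLp_injective 2 (norm_eq_zero.1 hi)), mul_zero]
    exact mul_nonneg (Nat.cast_nonneg _) (prod_nonneg fun i _ => norm_nonneg _)
  push Not at hν
  set B : Matrix m m ℝ := of fun i k => (ν i)⁻¹ * M i k
  have hB : B ∈ nonnegUnitRows m := fun i =>
    ⟨fun k => mul_nonneg (inv_nonneg.2 (norm_nonneg _)) (hM i k), by
      change ‖WithLp.toLp 2 ((ν i)⁻¹ • M i)‖ = 1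
      rw [WithLp.toLp_smul]
      exact norm_smul_inv_norm (𝕜 := ℝ) (norm_ne_zero_iff.1 (hν i))⟩
  have hMB : M.permanent = (∏ i, ν i) * B.permanent := by
    rw [← permanent_mul_rows]
    congr 1
    ext i k
    simp [B, mul_inv_cancel_left₀ (hν i)]
  calc √(Fintype.card m) ^ Fintype.card m * M.permanent
      = (∏ i, ν i) * (√(Fintype.card m) ^ Fintype.card m * B.permanent) := by
        rw [hMB]; ring
    _ ≤ (∏ i, ν i) * (Fintype.card m).factorial :=
        mul_le_mul_of_nonneg_left (sqrt_card_pow_mul_permanent_le hB) (by positivity)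
    _ = _ := mul_comm _ _

theorem sqrt_card_pow_mul_norm_permanent_le {𝕜 : Type*} [RCLike 𝕜] (A : Matrix m m 𝕜) :
    √(Fintype.card m) ^ Fintype.card m * ‖A.permanent‖ ≤
      (Fintype.card m).factorial * ∏ i, ‖(WithLp.toLp 2 (A i) : EuclideanSpace 𝕜 m)‖ := by
  have hrow : ∀ i, ‖(WithLp.toLp 2 fun k => ‖A i k‖ : EuclideanSpace ℝ m)‖ =
      ‖(WithLp.toLp 2 (A i) : EuclideanSpace 𝕜 m)‖ := fun i => by
    simp [EuclideanSpace.norm_eq]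
  calc √(Fintype.card m) ^ Fintype.card m * ‖A.permanent‖
      ≤ √(Fintype.card m) ^ Fintype.card m * (of fun i k => ‖A i k‖).permanent :=
        mul_le_mul_of_nonneg_left (norm_permanent_le A) (by positivity)
    _ ≤ (Fintype.card m).factorial *
          ∏ i, ‖(WithLp.toLp 2 fun k => ‖A i k‖ : EuclideanSpace ℝ m)‖ :=
        sqrt_card_pow_mul_permanent_le_prod_norm fun i k => norm_nonneg (A i k)
    _ = _ := by simp only [hrow]

end NonnegUnitRows

theorem norm_eq_prod_of_apply_eq_prod {T : TensorSpace ι} {v : ∀ e, ι e → ℂ}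
    (hT : ∀ i, T i = ∏ e, v e (i e)) :
    ‖T‖ = ∏ e, ‖(WithLp.toLp 2 (v e) : EuclideanSpace ℂ (ι e))‖ := by
  simp only [EuclideanSpace.norm_eq, hT, norm_prod, ← prod_pow]
  rw [← Fintype.prod_sum (fun e k => ‖v e k‖ ^ 2),
    Real.sqrt_prod _ fun e _ => sum_nonneg fun k _ => by positivity]

theorem norm_inner_le_of_eq_sum_isPure {S T : TensorSpace ι} {c C : ℝ}
    (hS : ∀ u, IsPure u → c * ‖(inner ℂ S u : ℂ)‖ ≤ C * ‖u‖) {r : ℕ} {v : Fin r → TensorSpace ι}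
    (hv : ∀ i, IsPure (v i)) (hT : T = ∑ i, v i) (hc : 0 ≤ c) :
    c * ‖(inner ℂ S T : ℂ)‖ ≤ C * ∑ i, ‖v i‖ := by
  rw [hT, inner_sum, mul_sum]
  exact (mul_le_mul_of_nonneg_left (norm_sum_le _ _) hc).trans
    (by rw [mul_sum]; exact sum_le_sum fun i _ => hS (v i) (hv i))

theorem nuclearNorm_eq_of_isLeast {T : TensorSpace ι} {c : ℝ} {κ : Type*} [Fintype κ]
    (v : κ → TensorSpace ι) (hv : ∀ k, IsPure (v k)) (hT : T = ∑ k, v k) (hc : ∑ k, ‖v k‖ = c)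
    (hle : ∀ (r : ℕ) (w : Fin r → TensorSpace ι), (∀ i, IsPure (w i)) → T = ∑ i, w i →
      c ≤ ∑ i, ‖w i‖) :
    nuclearNorm T = c := by
  refine IsLeast.csInf_eq ⟨⟨Fintype.card κ, v ∘ (Fintype.equivFin κ).symm, fun i => hv _, ?_, ?_⟩,
    fun c' ⟨r, w, hw, hTw, hc'⟩ => hc' ▸ hle r w hw hTw⟩
  · rw [hT]; exact (Equiv.sum_comp _ v).symm
  · rw [← hc]; exact (Equiv.sum_comp _ fun k => ‖v k‖).symm

theorem sum_prod_units_mul_units_comp {m : Type*} [Fintype m] [DecidableEq m] (f : m → m) :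
    ∑ ε : m → ℤˣ, ∏ i, ((ε i : ℤ) * ε (f i)) = if f.Bijective then 2 ^ Fintype.card m else 0 := by
  set c : m → ℕ := fun j => #{i | f i = j}
  have hfiber : ∀ ε : m → ℤˣ, ∏ i, ((ε i : ℤ) * ε (f i)) = ∏ j, (ε j : ℤ) ^ (c j + 1) := by
    intro ε
    rw [prod_mul_distrib, ← prod_fiberwise univ f fun i => (ε (f i) : ℤ), ← prod_mul_distrib]
    refine prod_congr rfl fun j _ => ?_
    rw [prod_congr rfl fun i hi => by rw [(mem_filter.1 hi).2], prod_const, pow_succ']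
  simp only [hfiber, ← Fintype.prod_sum fun j (u : ℤˣ) => (u : ℤ) ^ (c j + 1)]
  have hunits : ∀ k : ℕ, ∑ u : ℤˣ, (u : ℤ) ^ k = 1 + (-1) ^ k := fun k => by simp
  simp only [hunits]
  split_ifs with hf
  · have hc : ∀ j, c j = 1 := fun j => card_eq_one.2 ⟨(Equiv.ofBijective f hf).symm j, by
      ext i
      simpa using ((Equiv.ofBijective f hf).eq_symm_apply).symm⟩
    simp [hc, card_univ]
  · obtain ⟨j, hj⟩ : ∃ j, ∀ i, f i ≠ j := by
      simpa [Function.Surjective] using fun hs => hf ⟨Finite.injective_iff_surjective.2 hs, hs⟩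
    have hc : c j = 0 := card_eq_zero.2 (filter_eq_empty_iff.2 fun i _ => hj i)
    exact prod_eq_zero (mem_univ j) (by simp [hc])

theorem inner_perTensor (n : ℕ) (T : TensorSpace fun _ : Fin n => Fin n) :
    inner ℂ (perTensor n) T = ∑ σ : Equiv.Perm (Fin n), T σ := by
  simp only [perTensor, PiLp.inner_apply, RCLike.inner_apply, apply_ite, map_one, map_zero,
    mul_one, mul_zero, ← sum_filter]
  exact sum_bij' (fun f hf => Equiv.ofBijective f (mem_filter.1 hf).2) (fun σ _ => σ)
    (fun _ _ => mem_univ _) (fun σ _ => mem_filter.2 ⟨mem_univ _, σ.bijective⟩)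
    (fun _ _ => rfl) (fun _ _ => Equiv.ext fun _ => rfl) (fun _ _ => rfl)

theorem inner_perTensor_self (n : ℕ) : inner ℂ (perTensor n) (perTensor n) = n.factorial := by
  rw [inner_perTensor]
  simp only [perTensor, Equiv.bijective, if_true, sum_const, card_univ, Fintype.card_perm,
    Fintype.card_fin, nsmul_eq_mul, mul_one]

theorem sqrt_pow_mul_norm_inner_perTensor_le {n : ℕ} {u : TensorSpace fun _ : Fin n => Fin n}
    (hu : IsPure u) : √n ^ n * ‖inner ℂ (perTensor n) u‖ ≤ n.factorial * ‖u‖ := by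
  obtain ⟨v, hv⟩ := hu
  have hper : inner ℂ (perTensor n) u = (Matrix.of v).permanent := by
    simp only [inner_perTensor, hv, Matrix.permanent_eq_sum_prod_apply, Matrix.of_apply]
  have hadamard := sqrt_card_pow_mul_norm_permanent_le (Matrix.of v)
  rw [Fintype.card_fin] at hadamard
  rwa [hper, norm_eq_prod_of_apply_eq_prod hv]

def signTensor {n : ℕ} (ε : Fin n → ℤˣ) : TensorSpace fun _ : Fin n => Fin n :=
  WithLp.toLp 2 fun f => ∏ e, ((ε e : ℤ) : ℂ) * ((ε (f e) : ℤ) : ℂ) / 2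

theorem isPure_signTensor {n : ℕ} (ε : Fin n → ℤˣ) : IsPure (signTensor ε) :=
  ⟨fun e k => ((ε e : ℤ) : ℂ) * ((ε k : ℤ) : ℂ) / 2, fun _ => rfl⟩

theorem norm_signTensor {n : ℕ} (ε : Fin n → ℤˣ) : ‖signTensor ε‖ = (√n / 2) ^ n := by
  have hfactor : ∀ e, ‖(WithLp.toLp 2 fun k => ((ε e : ℤ) : ℂ) * ((ε k : ℤ) : ℂ) / 2 :
      EuclideanSpace ℂ (Fin n))‖ = √n / 2 := fun e => by
    simp [EuclideanSpace.norm_eq, abs_unit_intCast, div_eq_mul_inv]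
  rw [norm_eq_prod_of_apply_eq_prod (v := fun e k => ((ε e : ℤ) : ℂ) * ((ε k : ℤ) : ℂ) / 2)
    fun _ => rfl, prod_congr rfl fun e _ => hfactor e, prod_const, card_univ, Fintype.card_fin]

theorem sum_signTensor (n : ℕ) : ∑ ε : Fin n → ℤˣ, signTensor ε = perTensor n := by
  ext f
  simp only [signTensor, perTensor, WithLp.ofLp_sum, Finset.sum_apply]
  calc ∑ ε : Fin n → ℤˣ, ∏ e, ((ε e : ℤ) : ℂ) * ((ε (f e) : ℤ) : ℂ) / 2
      = ((∑ ε : Fin n → ℤˣ, ∏ e, ((ε e : ℤ) * ε (f e)) : ℤ) : ℂ) * (1 / 2) ^ n := by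
        push_cast
        simp only [div_eq_mul_inv, prod_mul_distrib, prod_const, card_univ, Fintype.card_fin,
          sum_mul, one_mul, inv_pow]
    _ = if Function.Bijective f then 1 else 0 := by
        rw [sum_prod_units_mul_units_comp]
        split_ifs <;> simp

theorem sum_norm_signTensor (n : ℕ) : ∑ ε : Fin n → ℤˣ, ‖signTensor ε‖ = √n ^ n := by
  simp only [norm_signTensor, sum_const, card_univ, Fintype.card_fun, Fintype.card_units_int,
    Fintype.card_fin, nsmul_eq_mul, Nat.cast_pow, ← mul_pow]
  ring_nf

/-- **Theorem 1.14.** `‖per_n‖⋆ = n^{n/2}`. -/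
theorem perTensor_nuclearNorm (n : ℕ) :
    nuclearNorm (perTensor n) = (n : ℝ) ^ ((n : ℝ) / 2) := by
  have hpow : (n : ℝ) ^ ((n : ℝ) / 2) = √n ^ n := by
    rw [Real.sqrt_eq_rpow, ← Real.rpow_natCast, ← Real.rpow_mul (Nat.cast_nonneg n)]
    ring_nf
  rw [hpow]
  refine nuclearNorm_eq_of_isLeast signTensor isPure_signTensor (sum_signTensor n).symm
    (sum_norm_signTensor n) fun r w hw hT => ?_
  have hdual := norm_inner_le_of_eq_sum_isPure (fun u hu => sqrt_pow_mul_norm_inner_perTensor_le hu)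
    hw hT (by positivity)
  rw [inner_perTensor_self, Complex.norm_natCast, mul_comm] at hdual
  exact le_of_mul_le_mul_left hdual (Nat.cast_pos.2 n.factorial_pos)
end
end

section
/- Let det_n = ∑_{σ ∈ S_n} sgn(σ) e_{σ(1)} ⊗ e_{σ(2)} ⊗ ⋯ ⊗ e_{σ(n)} ∈ (ℂ^n)^{⊗n} be the determinant tensor. Then ‖det_n‖_⋆ = n!. -/
noncomputable section

open Finset

variable {d : ℕ} {ι : Fin d → Type*} [∀ e, Fintype (ι e)]

/-- The determinant tensor
`det_n = ∑_{σ ∈ S_n} sgn(σ) e_{σ(1)} ⊗ ⋯ ⊗ e_{σ(n)} ∈ (ℂⁿ)^{⊗n}`. -/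
def detTensor (n : ℕ) : TensorSpace (fun _ : Fin n => Fin n) :=
  WithLp.toLp 2 (fun f => if h : Function.Bijective f then
    ((Equiv.Perm.sign (Equiv.ofBijective f h) : ℤ) : ℂ) else 0)

/-! The `n!` tensors `sign σ • e_σ(1) ⊗ ⋯ ⊗ e_σ(n)` are pure unit vectors summing to `det_n`, so
`‖det_n‖⋆ ≤ n!`. Conversely `det_n` is its own dual certificate: `⟪det_n, a₁ ⊗ ⋯ ⊗ aₙ⟫` is the
determinant of the matrix with columns `aᵢ`, which Hadamard's inequality bounds by `∏ ‖aᵢ‖`; hence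
every decomposition `det_n = ∑ vₖ` into pure tensors has `n! = ⟪det_n, det_n⟫ ≤ ∑ ‖vₖ‖`. -/

open scoped InnerProductSpace

theorem OrthonormalBasis.norm_det_le_prod_norm {𝕜 E κ : Type*} [RCLike 𝕜] [NormedAddCommGroup E]
    [InnerProductSpace 𝕜 E] [Fintype κ] [DecidableEq κ] (e : OrthonormalBasis κ 𝕜 E)
    (v : κ → E) : ‖e.toBasis.det v‖ ≤ ∏ i, ‖v i‖ := by
  let σ := Fintype.equivFin κ
  have : FiniteDimensional 𝕜 E := e.toBasis.finiteDimensional_of_finite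
  have hdim : Module.finrank 𝕜 E = Fintype.card (Fin (Fintype.card κ)) := by
    rw [Fintype.card_fin, Module.finrank_eq_card_basis e.toBasis]
  -- `v` is upper triangular in its Gram-Schmidt basis `b`, and `‖det_e b‖ = 1`.
  let b := InnerProductSpace.gramSchmidtOrthonormalBasis hdim (v ∘ σ.symm)
  have hdet : e.toBasis.det v = (e.reindex σ).toBasis.det (v ∘ σ.symm) := by
    rw [OrthonormalBasis.reindex_toBasis, Module.Basis.det_reindex, Function.comp_assoc,
      σ.symm_comp_self, Function.comp_id]
  calc ‖e.toBasis.det v‖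
      = ‖(e.reindex σ).toBasis.det b‖ * ‖b.toBasis.det (v ∘ σ.symm)‖ := by
        rw [hdet, ← norm_mul, ← b.coe_toBasis, ← smul_eq_mul, ← AlternatingMap.smul_apply,
          ← AlternatingMap.eq_smul_basis_det]
    _ = ∏ i, ‖⟪b i, v (σ.symm i)⟫_𝕜‖ := by
        rw [OrthonormalBasis.det_to_matrix_orthonormalBasis, one_mul,
          InnerProductSpace.gramSchmidtOrthonormalBasis_det, norm_prod]
        rfl
    _ ≤ ∏ i, ‖v (σ.symm i)‖ := by
        gcongr with i
        simpa [b.orthonormal.1 i] using norm_inner_le_norm (𝕜 := 𝕜) (b i) (v (σ.symm i))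
    _ = ∏ i, ‖v i‖ := σ.symm.prod_comp fun i => ‖v i‖

def pureTensor (a : ∀ e, EuclideanSpace ℂ (ι e)) : TensorSpace ι :=
  WithLp.toLp 2 fun i => ∏ e, a e (i e)

theorem isPure_pureTensor (a : ∀ e, EuclideanSpace ℂ (ι e)) : IsPure (pureTensor a) :=
  ⟨fun e => a e, fun _ => rfl⟩

theorem IsPure.exists_eq_pureTensor {T : TensorSpace ι} (hT : IsPure T) :
    ∃ a, T = pureTensor a := by
  obtain ⟨v, hv⟩ := hT
  exact ⟨fun e => WithLp.toLp 2 (v e), PiLp.ext hv⟩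

theorem IsPure.smul [NeZero d] {T : TensorSpace ι} (hT : IsPure T) (c : ℂ) : IsPure (c • T) := by
  obtain ⟨v, hv⟩ := hT
  refine ⟨fun e j => (if e = 0 then c else 1) * v e j, fun i => ?_⟩
  rw [prod_mul_distrib, prod_ite_eq' univ (0 : Fin d), if_pos (mem_univ _), ← hv]
  rfl

theorem pureTensor_single [∀ e, DecidableEq (ι e)] (f : ∀ e, ι e) :
    pureTensor (fun e => EuclideanSpace.single (f e) (1 : ℂ)) = EuclideanSpace.single f 1 := by
  ext i
  simp only [pureTensor, PiLp.single_apply, prod_boole, mem_univ, true_imp_iff,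
    funext_iff]

theorem norm_pureTensor (a : ∀ e, EuclideanSpace ℂ (ι e)) :
    ‖pureTensor a‖ = ∏ e, ‖a e‖ := by
  refine (pow_left_inj₀ (norm_nonneg _) (by positivity) two_ne_zero).mp ?_
  simp only [EuclideanSpace.norm_sq_eq, ← prod_pow, prod_univ_sum, Fintype.piFinset_univ]
  simp [pureTensor, norm_prod, prod_pow]

theorem nuclearNorm_eq_of_dual_certificate {κ : Type*} [Fintype κ] {S T : TensorSpace ι}
    {v : κ → TensorSpace ι} (hv : ∀ k, IsPure (v k)) (hT : T = ∑ k, v k)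
    (hS : ∀ u, IsPure u → ‖⟪S, u⟫_ℂ‖ ≤ ‖u‖) (hST : ∑ k, ‖v k‖ ≤ ‖⟪S, T⟫_ℂ‖) :
    nuclearNorm T = ∑ k, ‖v k‖ := by
  let σ := Fintype.equivFin κ
  have hmem : ∑ k, ‖v k‖ ∈ {c : ℝ | ∃ (r : ℕ) (w : Fin r → TensorSpace ι),
      (∀ i, IsPure (w i)) ∧ T = ∑ i, w i ∧ c = ∑ i, ‖w i‖} :=
    ⟨_, v ∘ σ.symm, fun _ => hv _, hT.trans (σ.symm.sum_comp v).symm,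
      (σ.symm.sum_comp fun k => ‖v k‖).symm⟩
  refine le_antisymm (csInf_le ⟨0, ?_⟩ hmem) (hST.trans (le_csInf ⟨_, hmem⟩ ?_))
  · rintro _ ⟨r, w, -, -, rfl⟩
    positivity
  · rintro _ ⟨r, w, hw, rfl, rfl⟩
    calc ‖⟪S, ∑ i, w i⟫_ℂ‖ = ‖∑ i, ⟪S, w i⟫_ℂ‖ := by rw [inner_sum]
      _ ≤ ∑ i, ‖⟪S, w i⟫_ℂ‖ := norm_sum_le _ _
      _ ≤ ∑ i, ‖w i‖ := sum_le_sum fun i _ => hS _ (hw i)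

section Determinant

open Equiv Equiv.Perm

variable {n : ℕ}

theorem detTensor_apply_perm (σ : Perm (Fin n)) : detTensor n ⇑σ = (sign σ : ℂ) := by
  rw [detTensor, PiLp.toLp_apply, dif_pos σ.bijective, ofBijective_coe]

theorem detTensor_eq_sum :
    detTensor n = ∑ σ : Perm (Fin n), (sign σ : ℂ) • EuclideanSpace.single (⇑σ) 1 := by
  ext f
  simp only [WithLp.ofLp_sum, Finset.sum_apply, PiLp.smul_apply, PiLp.single_apply, smul_eq_mul,
    mul_ite, mul_one, mul_zero]
  by_cases hf : Function.Bijective f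
  · obtain ⟨σ, rfl⟩ : ∃ σ : Perm (Fin n), ⇑σ = f := ⟨Equiv.ofBijective f hf, rfl⟩
    simp [detTensor_apply_perm, DFunLike.coe_fn_eq]
  · rw [detTensor, PiLp.toLp_apply, dif_neg hf]
    refine (sum_eq_zero fun σ _ => if_neg ?_).symm
    rintro rfl
    exact hf σ.bijective

theorem isPure_sign_smul_single (σ : Perm (Fin n)) :
    IsPure ((sign σ : ℂ) • EuclideanSpace.single (⇑σ) (1 : ℂ)) := by
  rw [← pureTensor_single]
  rcases n.eq_zero_or_pos with rfl | hn
  -- in order `0` the only pure tensor is the empty product `1`, which cannot absorb a scalar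
  · rw [Subsingleton.elim σ 1, Perm.sign_one, Units.val_one, Int.cast_one, one_smul]
    exact isPure_pureTensor _
  · have : NeZero n := ⟨hn.ne'⟩
    exact (isPure_pureTensor _).smul _

theorem norm_sign_smul_single (σ : Perm (Fin n)) :
    ‖(sign σ : ℂ) • EuclideanSpace.single (⇑σ) (1 : ℂ)‖ = 1 := by
  simp [norm_smul, abs_unit_intCast]

theorem inner_detTensor_self : ⟪detTensor n, detTensor n⟫_ℂ = n.factorial := by
  nth_rw 2 [detTensor_eq_sum]
  simp only [inner_sum, inner_smul_right, EuclideanSpace.inner_single_right, detTensor_apply_perm,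
    one_mul, map_intCast, ← Int.cast_mul, ← Units.val_mul, Int.units_mul_self]
  simp [Fintype.card_perm]

theorem inner_detTensor_pureTensor (a : Fin n → EuclideanSpace ℂ (Fin n)) :
    ⟪detTensor n, pureTensor a⟫_ℂ = (EuclideanSpace.basisFun (Fin n) ℂ).toBasis.det a := by
  rw [detTensor_eq_sum, sum_inner, Module.Basis.det_apply, Matrix.det_apply]
  refine sum_congr rfl fun σ _ => ?_
  simp only [inner_smul_left, EuclideanSpace.inner_single_left, pureTensor, map_intCast, map_one,
    one_mul, Module.Basis.toMatrix_apply, OrthonormalBasis.coe_toBasis_repr_apply,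
    EuclideanSpace.basisFun_repr, Units.smul_def, zsmul_eq_mul]

theorem norm_inner_detTensor_le {u : TensorSpace fun _ : Fin n => Fin n} (hu : IsPure u) :
    ‖⟪detTensor n, u⟫_ℂ‖ ≤ ‖u‖ := by
  obtain ⟨a, rfl⟩ := hu.exists_eq_pureTensor
  rw [inner_detTensor_pureTensor, norm_pureTensor]
  exact OrthonormalBasis.norm_det_le_prod_norm _ a

end Determinant

/-- **Theorem 1.15.** `‖det_n‖⋆ = n!`. -/
theorem detTensor_nuclearNorm (n : ℕ) :
    nuclearNorm (detTensor n) = (n.factorial : ℝ) := by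
  have hsum : ∑ σ : Equiv.Perm (Fin n),
      ‖(Equiv.Perm.sign σ : ℂ) • EuclideanSpace.single (⇑σ) (1 : ℂ)‖ = n.factorial := by
    simp [norm_sign_smul_single, Fintype.card_perm]
  rw [← hsum]
  refine nuclearNorm_eq_of_dual_certificate isPure_sign_smul_single detTensor_eq_sum
    (fun _ => norm_inner_detTensor_le) ?_
  rw [hsum, inner_detTensor_self, Complex.norm_natCast]
end
end

section
/- Let V = V^(1) ⊗ ⋯ ⊗ V^(d) be a tensor product of finite-dimensional complex Hilbert spaces. Let w = (w_1,…,w_s) and v = (v_1,…,v_r) consist of pure tensors of unit norm, let λ_1 ≥ ⋯ ≥ λ_s > 0 and σ_1 ≥ ⋯ ≥ σ_r > 0 satisfy ∑_{i=1}^s λ_i w_i = ∑_{j=1}^r σ_j v_j. Suppose k ≤ s and l ≤ r are such that δ := k·[v]_1 − l·[w^[k]]_1 satisfies 0 ≤ δ ≤ [w^[k]]_1, where w^[k] = (w_1,…,w_k). Then [w^[k]]_1 · (σ_1 + σ_2 + ⋯ + σ_l) + δ·σ_{l+1} ≥ (1 − μ_1(w)) · (λ_1 + λ_2 + ⋯ +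 λ_k), where by convention σ_j = 0 for j > r. -/
/-!
Put `T = ∑ λᵢ wᵢ = ∑ σⱼ vⱼ` and test it against the first `k` tensors `wᵢ`. Expanding in the
`w`'s, each `|⟨T, wᵢ⟩|` is at least `λᵢ` minus cross terms; since the `λ`'s decrease, the cross
terms summed over `i < k` are at most `μ₁(w) (λ₁ + ⋯ + λ_k)`. Expanding in the `v`'s instead gives
`∑_{i<k} |⟨T, wᵢ⟩| ≤ ∑ⱼ σⱼ cⱼ` with `cⱼ = ∑_{i<k} |⟨vⱼ, wᵢ⟩|`. Testing the brackets on the pure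
unit tensors `vⱼ` and `wᵢ` gives `0 ≤ cⱼ ≤ [w^[k]]₁` and `∑ⱼ cⱼ ≤ k [v]₁ = l [w^[k]]₁ + δ`, and for
decreasing `σ` the sum `∑ σⱼ cⱼ` under these constraints is largest when `c` fills the first `l`
slots to capacity and puts the remaining mass `δ` at slot `l + 1`.
-/

noncomputable section

open Finset

variable {d : ℕ} {ι : Fin d → Type*} [∀ e, Fintype (ι e)]

open scoped InnerProductSpace

theorem sum_mul_le_of_threshold {α : Type*} [Fintype α] (L : Finset α) (σ c : α → ℝ)
    {B δ t : ℝ} (ht : 0 ≤ t) (hσL : ∀ j ∈ L, t ≤ σ j) (hσLc : ∀ j ∉ L, σ j ≤ t)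
    (hcL : ∀ j ∈ L, c j ≤ B) (hcLc : ∀ j ∉ L, 0 ≤ c j) (hsum : ∑ j, c j ≤ #L * B + δ) :
    ∑ j, σ j * c j ≤ B * ∑ j ∈ L, σ j + δ * t := by
  classical
  rw [← sum_add_sum_compl L] at hsum ⊢
  have hin : ∑ j ∈ L, σ j * c j ≤ ∑ j ∈ L, ((σ j - t) * B + t * c j) :=
    sum_le_sum fun j hj => by nlinarith [hσL j hj, hcL j hj]
  have hout : ∑ j ∈ Lᶜ, σ j * c j ≤ ∑ j ∈ Lᶜ, t * c j :=
    sum_le_sum fun j hj =>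
      mul_le_mul_of_nonneg_right (hσLc j (mem_compl.1 hj)) (hcLc j (mem_compl.1 hj))
  simp only [sum_add_distrib, ← mul_sum, ← sum_mul, sum_sub_distrib, sum_const,
    nsmul_eq_mul] at hin hout
  nlinarith [mul_le_mul_of_nonneg_left hsum ht]

theorem sum_sum_erase_mul_le_of_dominates {κ : Type*} [Fintype κ] [DecidableEq κ]
    (K : Finset κ) (lam : κ → ℝ) (a : κ → κ → ℝ) (hsymm : ∀ i j, a i j = a j i)
    (hnonneg : ∀ i j, 0 ≤ a i j) (hdom : ∀ i ∈ K, ∀ j ∉ K, lam j ≤ lam i) :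
    ∑ i ∈ K, ∑ j ∈ univ.erase i, lam j * a i j ≤ ∑ i ∈ K, lam i * ∑ j ∈ univ.erase i, a i j := by
  have hin : ∑ i ∈ K, ∑ j ∈ K, lam j * a i j = ∑ i ∈ K, ∑ j ∈ K, lam i * a i j := by
    rw [sum_comm]
    exact sum_congr rfl fun i _ => sum_congr rfl fun j _ => by rw [hsymm j i]
  have hout : ∑ i ∈ K, ∑ j ∈ Kᶜ, lam j * a i j ≤ ∑ i ∈ K, ∑ j ∈ Kᶜ, lam i * a i j :=
    sum_le_sum fun i hi => sum_le_sum fun j hj =>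
      mul_le_mul_of_nonneg_right (hdom i hi j (mem_compl.1 hj)) (hnonneg i j)
  simp only [sum_erase_eq_sub (mem_univ _), mul_sub, sum_sub_distrib, mul_sum]
  simp only [← sum_add_sum_compl K, sum_add_distrib]
  linarith

section InnerProductSpace

variable {𝕜 E : Type*} [RCLike 𝕜] [NormedAddCommGroup E] [InnerProductSpace 𝕜 E]

theorem norm_sub_sum_erase_le_norm_inner_sum_smul {κ : Type*} [Fintype κ] [DecidableEq κ]
    (a : κ → 𝕜) (w : κ → E) {i : κ} (hi : ‖w i‖ = 1) :
    ‖a i‖ - ∑ j ∈ univ.erase i, ‖a j‖ * ‖⟪w j, w i⟫_𝕜‖ ≤ ‖⟪∑ j, a j • w j, w i⟫_𝕜‖ := by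
  have hdiag : ‖⟪a i • w i, w i⟫_𝕜‖ = ‖a i‖ := by
    rw [inner_smul_left, inner_self_eq_norm_sq_to_K, hi]
    simp
  have hoff : ‖∑ j ∈ univ.erase i, ⟪a j • w j, w i⟫_𝕜‖ ≤
      ∑ j ∈ univ.erase i, ‖a j‖ * ‖⟪w j, w i⟫_𝕜‖ :=
    (norm_sum_le _ _).trans_eq <| sum_congr rfl fun j _ => by
      rw [inner_smul_left, norm_mul, RCLike.norm_conj]
  rw [sum_inner, ← add_sum_erase _ _ (mem_univ i)]
  linarith [norm_le_add_norm_add ⟪a i • w i, w i⟫_𝕜 (∑ j ∈ univ.erase i, ⟪a j • w j, w i⟫_𝕜)]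

theorem mul_sum_le_sum_norm_inner_sum_smul {κ : Type*} [Fintype κ] [DecidableEq κ]
    (K : Finset κ) (lam : κ → ℝ) (w : κ → E) {m : ℝ} (hw : ∀ i, ‖w i‖ = 1)
    (hlam : ∀ i, 0 ≤ lam i) (hdom : ∀ i ∈ K, ∀ j ∉ K, lam j ≤ lam i)
    (hm : ∀ i ∈ K, ∑ j ∈ univ.erase i, ‖⟪w i, w j⟫_𝕜‖ ≤ m) :
    (1 - m) * ∑ i ∈ K, lam i ≤ ∑ i ∈ K, ‖⟪∑ j, (lam j : 𝕜) • w j, w i⟫_𝕜‖ := by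
  have hcross := sum_sum_erase_mul_le_of_dominates K lam (fun i j => ‖⟪w i, w j⟫_𝕜‖)
    (fun i j => norm_inner_symm _ _) (fun _ _ => norm_nonneg _) hdom
  calc (1 - m) * ∑ i ∈ K, lam i = ∑ i ∈ K, lam i - ∑ i ∈ K, lam i * m := by
        rw [← sum_mul]; ring
    _ ≤ ∑ i ∈ K, lam i - ∑ i ∈ K, lam i * ∑ j ∈ univ.erase i, ‖⟪w i, w j⟫_𝕜‖ := by
        gcongr with i hi
        exacts [hlam i, hm i hi]
    _ ≤ ∑ i ∈ K, lam i - ∑ i ∈ K, ∑ j ∈ univ.erase i, lam j * ‖⟪w i, w j⟫_𝕜‖ := by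
        linarith
    _ = ∑ i ∈ K, (‖(lam i : 𝕜)‖ - ∑ j ∈ univ.erase i, ‖(lam j : 𝕜)‖ * ‖⟪w j, w i⟫_𝕜‖) := by
        simp only [RCLike.norm_ofReal, abs_of_nonneg (hlam _), norm_inner_symm (w _) (w _),
          sum_sub_distrib]
    _ ≤ ∑ i ∈ K, ‖⟪∑ j, (lam j : 𝕜) • w j, w i⟫_𝕜‖ :=
        sum_le_sum fun i _ => norm_sub_sum_erase_le_norm_inner_sum_smul (fun j => (lam j : 𝕜)) w (hw i)

theorem sum_norm_inner_sum_smul_le {κ ρ : Type*} [Fintype ρ] (K : Finset κ) (b : ρ → 𝕜)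
    (v : ρ → E) (u : κ → E) :
    ∑ i ∈ K, ‖⟪∑ j, b j • v j, u i⟫_𝕜‖ ≤ ∑ j, ‖b j‖ * ∑ i ∈ K, ‖⟪v j, u i⟫_𝕜‖ := by
  calc ∑ i ∈ K, ‖⟪∑ j, b j • v j, u i⟫_𝕜‖ ≤ ∑ i ∈ K, ∑ j, ‖b j‖ * ‖⟪v j, u i⟫_𝕜‖ :=
        sum_le_sum fun i _ => by
          rw [sum_inner]
          refine (norm_sum_le _ _).trans_eq (sum_congr rfl fun j _ => ?_)
          rw [inner_smul_left, norm_mul, RCLike.norm_conj]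
    _ = ∑ j, ‖b j‖ * ∑ i ∈ K, ‖⟪v j, u i⟫_𝕜‖ := by
        rw [sum_comm]
        simp only [mul_sum]

end InnerProductSpace

theorem le_bracket_one {κ : Type*} [Fintype κ] (S : κ → TensorSpace ι) {u : TensorSpace ι}
    (hu : IsPure u) (hu1 : ‖u‖ = 1) : ∑ i, ‖⟪S i, u⟫_ℂ‖ ≤ bracket S 1 := by
  refine le_csSup ⟨∑ i, ‖S i‖, ?_⟩ ⟨u, hu, hu1, by simp⟩
  rintro _ ⟨x, -, hx1, rfl⟩
  simp only [Real.rpow_one, div_one]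
  exact sum_le_sum fun i _ => (norm_inner_le_norm _ _).trans_eq (by rw [hx1, mul_one])

theorem sum_erase_norm_inner_le_mu {κ : Type*} [Fintype κ] [DecidableEq κ]
    (v : κ → TensorSpace ι) (i : κ) : ∑ j ∈ univ.erase i, ‖⟪v i, v j⟫_ℂ‖ ≤ mu v 1 := by
  refine le_csSup ((Set.finite_range fun i =>
    (∑ j ∈ univ.erase i, ‖⟪v i, v j⟫_ℂ‖ ^ (1 : ℝ)) ^ (1 / (1 : ℝ))).bddAbove.mono ?_) ⟨i, by simp⟩
  rintro _ ⟨i, rfl⟩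
  exact ⟨i, rfl⟩

theorem Fin.mem_map_castLEEmb_univ {n m : ℕ} (h : n ≤ m) (j : Fin m) :
    j ∈ univ.map (Fin.castLEEmb h) ↔ (j : ℕ) < n := by
  refine ⟨fun hj => ?_, fun hj => mem_map.2 ⟨⟨j, hj⟩, mem_univ _, rfl⟩⟩
  obtain ⟨i, -, rfl⟩ := mem_map.1 hj
  exact i.isLt

theorem main_singular_value_inequality_general {d s r : ℕ} {ι : Fin d → Type*} [∀ e, Fintype (ι e)]
    (w : Fin s → TensorSpace ι) (v : Fin r → TensorSpace ι)
    (lam : Fin s → ℝ) (sig : Fin r → ℝ)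
    (hwpure : ∀ i, IsPure (w i)) (hwunit : ∀ i, ‖w i‖ = 1)
    (hvpure : ∀ j, IsPure (v j)) (hvunit : ∀ j, ‖v j‖ = 1)
    (hlam_mono : ∀ i i' : Fin s, i ≤ i' → lam i' ≤ lam i) (hlam_pos : ∀ i, 0 < lam i)
    (hsig_mono : ∀ j j' : Fin r, j ≤ j' → sig j' ≤ sig j) (hsig_pos : ∀ j, 0 < sig j)
    (heq : ∑ i, (lam i : ℂ) • w i = ∑ j, (sig j : ℂ) • v j)
    (k l : ℕ) (hk : k ≤ s) (hl : l ≤ r)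
    (δ : ℝ)
    (hδ : δ = k * bracket v 1 - l * bracket (fun i : Fin k => w (Fin.castLE hk i)) 1) :
    (1 - mu w 1) * (∑ i : Fin k, lam (Fin.castLE hk i)) ≤
      bracket (fun i : Fin k => w (Fin.castLE hk i)) 1 *
          (∑ j ∈ Finset.range l, if hj : j < r then sig ⟨j, hj⟩ else 0) +
        δ * (if hl' : l < r then sig ⟨l, hl'⟩ else 0) := by
  set B := bracket (fun i : Fin k => w (Fin.castLE hk i)) 1
  set K := univ.map (Fin.castLEEmb hk)
  set L := univ.map (Fin.castLEEmb hl)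
  set t := if hl' : l < r then sig ⟨l, hl'⟩ else 0
  set c : Fin r → ℝ := fun j => ∑ i ∈ K, ‖⟪v j, w i⟫_ℂ‖
  have hlower : (1 - mu w 1) * ∑ i ∈ K, lam i ≤ ∑ i ∈ K, ‖⟪∑ j, (sig j : ℂ) • v j, w i⟫_ℂ‖ := by
    rw [← heq]
    refine mul_sum_le_sum_norm_inner_sum_smul K lam w hwunit (fun i => (hlam_pos i).le)
      (fun i hi j hj => hlam_mono i j ?_) (fun i _ => sum_erase_norm_inner_le_mu w i)
    rw [Fin.mem_map_castLEEmb_univ] at hi hj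
    exact Fin.le_def.2 (by omega)
  have hupper : ∑ i ∈ K, ‖⟪∑ j, (sig j : ℂ) • v j, w i⟫_ℂ‖ ≤ ∑ j, sig j * c j := by
    simpa only [Complex.norm_real, Real.norm_eq_abs, abs_of_pos (hsig_pos _)]
      using sum_norm_inner_sum_smul_le K (fun j => (sig j : ℂ)) v w
  have hcB : ∀ j, c j ≤ B := fun j => by
    simpa only [c, K, sum_map, Fin.coe_castLEEmb, norm_inner_symm (v j)]
      using le_bracket_one (fun i : Fin k => w (Fin.castLE hk i)) (hvpure j) (hvunit j)
  have hcsum : ∑ j, c j ≤ #L * B + δ :=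
    calc ∑ j, c j = ∑ i ∈ K, ∑ j, ‖⟪v j, w i⟫_ℂ‖ := sum_comm
      _ ≤ ∑ i ∈ K, bracket v 1 := sum_le_sum fun i _ => le_bracket_one v (hwpure i) (hwunit i)
      _ = #L * B + δ := by simp [K, L, hδ]
  have hthreshold : ∑ j, sig j * c j ≤ B * ∑ j ∈ L, sig j + δ * t := by
    refine sum_mul_le_of_threshold L sig c ?_ (fun j hj => ?_) (fun j hj => ?_)
      (fun j _ => hcB j) (fun j _ => sum_nonneg fun _ _ => norm_nonneg _) hcsum
    · unfold t; split_ifs <;> simp [(hsig_pos _).le]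
    · rw [Fin.mem_map_castLEEmb_univ] at hj
      unfold t; split_ifs with hlr
      exacts [hsig_mono _ _ (Fin.le_def.2 hj.le), (hsig_pos j).le]
    · rw [Fin.mem_map_castLEEmb_univ, not_lt] at hj
      have hlr : l < r := hj.trans_lt j.isLt
      unfold t; rw [dif_pos hlr]
      exact hsig_mono _ _ (Fin.le_def.2 hj)
  have hsumL : ∑ j ∈ L, sig j = ∑ j ∈ range l, if hj : j < r then sig ⟨j, hj⟩ else 0 := by
    rw [sum_map, ← Fin.sum_univ_eq_sum_range]
    exact sum_congr rfl fun j _ => by rw [dif_pos (j.isLt.trans_le hl)]; rfl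
  calc (1 - mu w 1) * ∑ i : Fin k, lam (Fin.castLE hk i) = (1 - mu w 1) * ∑ i ∈ K, lam i := by
        rw [sum_map]; rfl
    _ ≤ ∑ j, sig j * c j := hlower.trans hupper
    _ ≤ B * ∑ j ∈ L, sig j + δ * t := hthreshold
    _ = _ := by rw [hsumL]

/-- **Theorem 6.1 (main theorem).** Suppose `∑ᵢ λᵢ wᵢ = ∑ⱼ σⱼ vⱼ` with all `wᵢ, vⱼ` pure
tensors of unit length, `λ₁ ≥ ⋯ ≥ λ_s > 0`, `σ₁ ≥ ⋯ ≥ σ_r > 0`.  If `k ≤ s`, `l ≤ r` and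
`δ := k·[v]₁ − l·[w^[k]]₁` satisfies `0 ≤ δ ≤ [w^[k]]₁`, then
`[w^[k]]₁(σ₁ + ⋯ + σ_l) + δ σ_{l+1} ≥ (1 − μ₁(w))(λ₁ + ⋯ + λ_k)`,
with the convention `σ_j = 0` for `j > r`. -/
theorem main_singular_value_inequality {d s r : ℕ} {ι : Fin d → Type*} [∀ e, Fintype (ι e)]
    (w : Fin s → TensorSpace ι) (v : Fin r → TensorSpace ι)
    (lam : Fin s → ℝ) (sig : Fin r → ℝ)
    (hwpure : ∀ i, IsPure (w i)) (hwunit : ∀ i, ‖w i‖ = 1)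
    (hvpure : ∀ j, IsPure (v j)) (hvunit : ∀ j, ‖v j‖ = 1)
    (hlam_mono : ∀ i i' : Fin s, i ≤ i' → lam i' ≤ lam i) (hlam_pos : ∀ i, 0 < lam i)
    (hsig_mono : ∀ j j' : Fin r, j ≤ j' → sig j' ≤ sig j) (hsig_pos : ∀ j, 0 < sig j)
    (heq : ∑ i, (lam i : ℂ) • w i = ∑ j, (sig j : ℂ) • v j)
    (k l : ℕ) (hk : k ≤ s) (hl : l ≤ r)
    (δ : ℝ)
    (hδ : δ = k * bracket v 1 - l * bracket (fun i : Fin k => w (Fin.castLE hk i)) 1)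
    (hδ0 : 0 ≤ δ) (hδ1 : δ ≤ bracket (fun i : Fin k => w (Fin.castLE hk i)) 1) :
    (1 - mu w 1) * (∑ i : Fin k, lam (Fin.castLE hk i)) ≤
      bracket (fun i : Fin k => w (Fin.castLE hk i)) 1 *
          (∑ j ∈ Finset.range l, if hj : j < r then sig ⟨j, hj⟩ else 0) +
        δ * (if hl' : l < r then sig ⟨l, hl'⟩ else 0) :=
  main_singular_value_inequality_general w v lam sig hwpure hwunit hvpure hvunit hlam_mono hlam_pos
    hsig_mono hsig_pos heq k l hk hl δ hδ
end
end

section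
/- Let V = (V, (V^(1),…,V^(d))) and W = (W, (W^(1),…,W^(e))) be tensor product spaces of finite-dimensional complex Hilbert spaces, let S = (S_1,…,S_r) be an r-tuple of tensors in V and T = (T_1,…,T_r) an r-tuple of tensors in W, and suppose α, β, γ > 0 satisfy 1/α + 1/β = 1/γ. Then [S ⊗ T]_γ ≤ [S]_α · [T]_β, where S ⊗ T = (S_1⊗T_1,…,S_r⊗T_r) is viewed in the horizontal tensor product space (V ⊗ W, (V^(1),…,V^(d),W^(1),…,W^(e))). -/
noncomputable section

open Finset

variable {d : ℕ} {ι : Fin d → Type*} [∀ e, Fintype (ι e)]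

/-- The horizontal tensor product space of `V = V⁽¹⁾ ⊗ ⋯ ⊗ V⁽ᵈ⁾` and
`W = W⁽¹⁾ ⊗ ⋯ ⊗ W⁽ᵉ⁾`, i.e. `V ⊗ W` with factors `(V⁽¹⁾, …, V⁽ᵈ⁾, W⁽¹⁾, …, W⁽ᵉ⁾)`. -/
abbrev HTensorSpace {d e : ℕ} (ι : Fin d → Type*) (κ : Fin e → Type*)
    [∀ i, Fintype (ι i)] [∀ j, Fintype (κ j)] : Type _ :=
  EuclideanSpace ℂ ((∀ i, ι i) × (∀ j, κ j))

/-- The horizontal tensor product `x ⊗ y` of two tensors. -/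
def hprod {d e : ℕ} {ι : Fin d → Type*} {κ : Fin e → Type*}
    [∀ i, Fintype (ι i)] [∀ j, Fintype (κ j)]
    (x : TensorSpace ι) (y : TensorSpace κ) : HTensorSpace ι κ :=
  WithLp.toLp 2 (fun p => x p.1 * y p.2)

/-- A pure tensor in the horizontal tensor product space `(V ⊗ W, (V⁽¹⁾, …, W⁽ᵉ⁾))`:
this is exactly a product of a pure tensor of `V` and a pure tensor of `W`. -/
def IsPureH {d e : ℕ} {ι : Fin d → Type*} {κ : Fin e → Type*}
    [∀ i, Fintype (ι i)] [∀ j, Fintype (κ j)] (u : HTensorSpace ι κ) : Prop :=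
  ∃ (x : TensorSpace ι) (y : TensorSpace κ), IsPure x ∧ IsPure y ∧ ∀ p, u p = x p.1 * y p.2

/-- `[S]_α` computed in the horizontal tensor product space. -/
def bracketH {d e : ℕ} {ι : Fin d → Type*} {κ : Fin e → Type*}
    [∀ i, Fintype (ι i)] [∀ j, Fintype (κ j)] {m : Type*} [Fintype m]
    (S : m → HTensorSpace ι κ) (α : ℝ) : ℝ :=
  sSup {c : ℝ | ∃ u : HTensorSpace ι κ, IsPureH u ∧ ‖u‖ = 1 ∧
    c = (∑ i, ‖(inner ℂ (S i) u : ℂ)‖ ^ α) ^ (1 / α)}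

/-!
A unit pure tensor of the horizontal product is `x ⊗ y` with `x`, `y` pure and `‖x‖ ‖y‖ = 1`, and
`⟪Sᵢ ⊗ Tᵢ, x ⊗ y⟫ = ⟪Sᵢ, x⟫ ⟪Tᵢ, y⟫`. Hölder's inequality for the exponents `1/γ = 1/α + 1/β`
bounds the `ℓ^γ` norm of these products by `(∑ |⟪Sᵢ, x⟫|^α)^(1/α) (∑ |⟪Tᵢ, y⟫|^β)^(1/β)`, and by
homogeneity the two factors are at most `[S]_α ‖x‖` and `[T]_β ‖y‖`.
-/

theorem IsPure.norm_eq_one_of_order_zero {ι : Fin 0 → Type*} [∀ e, Fintype (ι e)]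
    {x : TensorSpace ι} (hx : IsPure x) : ‖x‖ = 1 := by
  obtain ⟨v, hv⟩ := hx
  have hx1 : x = WithLp.toLp 2 (fun _ => 1) := PiLp.ext fun i => by simp [hv i]
  simp [hx1, EuclideanSpace.norm_eq]

theorem IsPure.smul_s16 {n : ℕ} {ι : Fin (n + 1) → Type*} [∀ e, Fintype (ι e)]
    {x : TensorSpace ι} (hx : IsPure x) (c : ℂ) : IsPure (c • x) := by
  obtain ⟨v, hv⟩ := hx
  refine ⟨Function.update v 0 (fun t => c * v 0 t), fun i => ?_⟩
  rw [PiLp.smul_apply, hv i, Fin.prod_univ_succ, Fin.prod_univ_succ, Function.update_self,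
    smul_eq_mul, mul_assoc]
  simp only [Function.update_of_ne (Fin.succ_ne_zero _)]

theorem IsPure.inv_norm_smul {x : TensorSpace ι} (hx : IsPure x) :
    IsPure ((‖x‖ : ℂ)⁻¹ • x) := by
  -- with no factors the only pure tensor is the empty product `1`, which cannot be rescaled
  cases d with
  | zero => simpa [hx.norm_eq_one_of_order_zero] using hx
  | succ n => exact hx.smul_s16 _

section Bracket

variable {m : Type*} [Fintype m]

theorem bracket_nonneg (S : m → TensorSpace ι) (α : ℝ) : 0 ≤ bracket S α := by
  refine Real.sSup_nonneg ?_
  rintro c ⟨u, -, -, rfl⟩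
  positivity

theorem rpow_sum_norm_inner_le_bracket (S : m → TensorSpace ι) {α : ℝ} (hα : 0 < α)
    {u : TensorSpace ι} (hu : IsPure u) (hu1 : ‖u‖ = 1) :
    (∑ i, ‖(inner ℂ (S i) u : ℂ)‖ ^ α) ^ (1 / α) ≤ bracket S α := by
  refine le_csSup ⟨(∑ i, ‖S i‖ ^ α) ^ (1 / α), ?_⟩ ⟨u, hu, hu1, rfl⟩
  rintro c ⟨v, -, hv1, rfl⟩
  gcongr with i
  simpa [hv1] using norm_inner_le_norm (𝕜 := ℂ) (S i) v

theorem rpow_sum_norm_inner_le_bracket_mul_norm (S : m → TensorSpace ι) {α : ℝ} (hα : 0 < α)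
    {x : TensorSpace ι} (hx : IsPure x) :
    (∑ i, ‖(inner ℂ (S i) x : ℂ)‖ ^ α) ^ (1 / α) ≤ bracket S α * ‖x‖ := by
  rcases eq_or_ne x 0 with rfl | hx0
  · simp [Real.zero_rpow hα.ne', Real.zero_rpow (inv_pos.2 hα).ne']
  set x₁ : TensorSpace ι := (‖x‖ : ℂ)⁻¹ • x
  have hx₁ : ‖x₁‖ = 1 := by
    simp [x₁, norm_smul, hx0]
  have hscale : ∀ i, ‖(inner ℂ (S i) x : ℂ)‖ = ‖x‖ * ‖(inner ℂ (S i) x₁ : ℂ)‖ := by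
    intro i
    simp [x₁, hx0]
  calc (∑ i, ‖(inner ℂ (S i) x : ℂ)‖ ^ α) ^ (1 / α)
      = ‖x‖ * (∑ i, ‖(inner ℂ (S i) x₁ : ℂ)‖ ^ α) ^ (1 / α) := by
        simp_rw [hscale, Real.mul_rpow (norm_nonneg _) (norm_nonneg _), ← Finset.mul_sum]
        rw [Real.mul_rpow (by positivity) (by positivity), ← Real.rpow_mul (norm_nonneg _),
          mul_one_div_cancel hα.ne', Real.rpow_one]
    _ ≤ ‖x‖ * bracket S α :=
        mul_le_mul_of_nonneg_left (rpow_sum_norm_inner_le_bracket S hα hx.inv_norm_smul hx₁)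
          (norm_nonneg x)
    _ = bracket S α * ‖x‖ := mul_comm _ _

end Bracket

section Horizontal

variable {e : ℕ} {κ : Fin e → Type*} [∀ j, Fintype (κ j)]

theorem inner_hprod (a x : TensorSpace ι) (b y : TensorSpace κ) :
    (inner ℂ (hprod a b) (hprod x y) : ℂ) = (inner ℂ a x : ℂ) * (inner ℂ b y : ℂ) := by
  simp only [PiLp.inner_apply, RCLike.inner_apply, hprod,
    Fintype.sum_prod_type, Finset.sum_mul_sum, map_mul]
  refine Finset.sum_congr rfl fun p _ => Finset.sum_congr rfl fun q _ => by ring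

theorem norm_hprod (x : TensorSpace ι) (y : TensorSpace κ) : ‖hprod x y‖ = ‖x‖ * ‖y‖ := by
  simp only [EuclideanSpace.norm_eq, hprod, norm_mul, mul_pow,
    Fintype.sum_prod_type, ← Finset.sum_mul_sum]
  exact Real.sqrt_mul (by positivity) _

theorem IsPureH.exists_eq_hprod {u : HTensorSpace ι κ} (hu : IsPureH u) :
    ∃ x y, IsPure x ∧ IsPure y ∧ u = hprod x y := by
  obtain ⟨x, y, hx, hy, hxy⟩ := hu
  exact ⟨x, y, hx, hy, PiLp.ext hxy⟩

end Horizontal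

theorem bracket_horizontal_holder_general {d e r : ℕ} {ι : Fin d → Type*} {κ : Fin e → Type*}
    [∀ i, Fintype (ι i)] [∀ j, Fintype (κ j)]
    (S : Fin r → TensorSpace ι) (T : Fin r → TensorSpace κ)
    (α β γ : ℝ) (hα : 0 < α) (hβ : 0 < β)
    (h : 1 / α + 1 / β = 1 / γ) :
    bracketH (fun i => hprod (S i) (T i)) γ ≤ bracket S α * bracket T β := by
  have hαβγ : α.HolderTriple β γ := ⟨by simpa only [one_div] using h, hα, hβ⟩
  refine Real.sSup_le ?_ (mul_nonneg (bracket_nonneg S α) (bracket_nonneg T β))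
  rintro c ⟨u, hu, hu1, rfl⟩
  obtain ⟨x, y, hx, hy, rfl⟩ := hu.exists_eq_hprod
  rw [norm_hprod] at hu1
  calc (∑ i, ‖(inner ℂ (hprod (S i) (T i)) (hprod x y) : ℂ)‖ ^ γ) ^ (1 / γ)
      ≤ (∑ i, ‖(inner ℂ (S i) x : ℂ)‖ ^ α) ^ (1 / α) *
          (∑ i, ‖(inner ℂ (T i) y : ℂ)‖ ^ β) ^ (1 / β) := by
        have holder := NNReal.coe_le_coe.2 <| NNReal.Lr_le_Lp_mul_Lq univ
          (fun i => ‖(inner ℂ (S i) x : ℂ)‖₊) (fun i => ‖(inner ℂ (T i) y : ℂ)‖₊) hαβγ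
        push_cast at holder
        simpa only [inner_hprod, norm_mul] using holder
    _ ≤ (bracket S α * ‖x‖) * (bracket T β * ‖y‖) := by
        gcongr
        · exact mul_nonneg (bracket_nonneg S α) (norm_nonneg x)
        · exact rpow_sum_norm_inner_le_bracket_mul_norm S hα hx
        · exact rpow_sum_norm_inner_le_bracket_mul_norm T hβ hy
    _ = bracket S α * bracket T β := by rw [mul_mul_mul_comm, hu1, mul_one]

/-- **Lemma 3.1 (Hölder inequality for horizontal tensor products).** If `1/α + 1/β = 1/γ`
then `[S ⊗ T]_γ ≤ [S]_α [T]_β`. -/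
theorem bracket_horizontal_holder {d e r : ℕ} {ι : Fin d → Type*} {κ : Fin e → Type*}
    [∀ i, Fintype (ι i)] [∀ j, Fintype (κ j)]
    (S : Fin r → TensorSpace ι) (T : Fin r → TensorSpace κ)
    (α β γ : ℝ) (hα : 0 < α) (hβ : 0 < β) (hγ : 0 < γ)
    (h : 1 / α + 1 / β = 1 / γ) :
    bracketH (fun i => hprod (S i) (T i)) γ ≤ bracket S α * bracket T β :=
  bracket_horizontal_holder_general S T α β γ hα hβ h
end
end

section
/- Let V = V^(1) ⊗ ⋯ ⊗ V^(d) be a tensor product of finite-dimensional complex Hilbert spaces, let v = (v_1,…,v_r) be an r-tuple of pure tensors of unit norm, and let α ≥ 1. Then [v]_{2α}^{2α} ≤ μ_α(v)^α + 1. -/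
noncomputable section

open Finset

variable {d : ℕ} {ι : Fin d → Type*} [∀ e, Fintype (ι e)]

/-!
For a unit vector `u` put `cᵢ = ‖⟪vᵢ, u⟫‖`, `gᵢⱼ = ‖⟪vᵢ, vⱼ⟫‖` and `S = ∑ᵢ cᵢ ^ (2α)`.
Pairing `u` with `∑ tᵢ • vᵢ`, where `tᵢ` has modulus `cᵢ ^ (2α - 1)` and the phase of `⟪vᵢ, u⟫`,
gives `S² ≤ ∑ᵢⱼ gᵢⱼ cᵢ ^ (2α - 1) cⱼ ^ (2α - 1)`. Hölder with exponents `α` and `α / (α - 1)`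
bounds the right side by `A ^ (1/α) (S²) ^ (1 - 1/α)` with `A = ∑ᵢⱼ (gᵢⱼ cᵢ cⱼ) ^ α`, so `S² ≤ A`.
Since `gᵢᵢ = 1`, the Schur test gives `A ≤ (maxᵢ ∑ⱼ gᵢⱼ ^ α) S ≤ (μ_α(v) ^ α + 1) S`.
-/

theorem sum_mul_rpow_sub_one_le {κ : Type*} (s : Finset κ) {p : ℝ} (hp : 1 ≤ p) {f h : κ → ℝ}
    (hf : ∀ i ∈ s, 0 ≤ f i) (hh : ∀ i ∈ s, 0 ≤ h i) :
    ∑ i ∈ s, f i * h i ^ (p - 1) ≤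
      (∑ i ∈ s, f i ^ p) ^ p⁻¹ * (∑ i ∈ s, h i ^ p) ^ (1 - p⁻¹) := by
  rcases hp.eq_or_lt with rfl | hp
  · simp
  have hpq := Real.HolderConjugate.conjExponent hp
  convert Real.inner_le_Lp_mul_Lq_of_nonneg s hpq hf
    (fun i hi => Real.rpow_nonneg (hh i hi) (p - 1)) using 3
  · rw [one_div]
  · refine sum_congr rfl fun i hi => ?_
    rw [← Real.rpow_mul (hh i hi), Real.conjExponent, mul_div_cancel₀ _ (by linarith)]
  · rw [Real.conjExponent, one_div_div, sub_div, div_self (by positivity), one_div]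

theorem le_of_le_rpow_mul_rpow {x y θ : ℝ} (hx : 0 ≤ x) (hy : 0 ≤ y) (hθ : 0 < θ)
    (h : x ≤ y ^ θ * x ^ (1 - θ)) : x ≤ y := by
  rcases hx.eq_or_lt with rfl | hx
  · exact hy
  have hsplit : x = x ^ θ * x ^ (1 - θ) := by
    rw [← Real.rpow_add hx, add_sub_cancel, Real.rpow_one]
  nth_rewrite 1 [hsplit] at h
  exact (Real.rpow_le_rpow_iff hx.le hy hθ).mp
    (le_of_mul_le_mul_right h (Real.rpow_pos_of_pos hx _))

theorem sum_sum_mul_mul_le_of_sum_le {κ : Type*} [Fintype κ] {h : κ → κ → ℝ} {M : ℝ}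
    (h_nonneg : ∀ i j, 0 ≤ h i j) (h_symm : ∀ i j, h i j = h j i)
    (h_row : ∀ i, ∑ j, h i j ≤ M) (x : κ → ℝ) :
    ∑ i, ∑ j, h i j * (x i * x j) ≤ M * ∑ i, x i ^ 2 := by
  have h_swap : ∑ i, ∑ j, h i j * x j ^ 2 = ∑ i, ∑ j, h i j * x i ^ 2 := by
    rw [sum_comm]
    exact sum_congr rfl fun i _ => sum_congr rfl fun j _ => by rw [h_symm]
  calc ∑ i, ∑ j, h i j * (x i * x j)
      ≤ ∑ i, ∑ j, h i j * ((x i ^ 2 + x j ^ 2) / 2) := by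
        gcongr with i _ j _
        · exact h_nonneg i j
        · linarith [two_mul_le_add_sq (x i) (x j)]
    _ = ∑ i, (∑ j, h i j) * x i ^ 2 := by
        simp_rw [mul_div_assoc', mul_add, add_div, sum_add_distrib, ← sum_div, h_swap, sum_mul]
        ring
    _ ≤ ∑ i, M * x i ^ 2 := by gcongr with i; exact h_row i
    _ = M * ∑ i, x i ^ 2 := (mul_sum ..).symm

section InnerProductSpace

variable {𝕜 E : Type*} [RCLike 𝕜] [NormedAddCommGroup E] [InnerProductSpace 𝕜 E]
  {κ : Type*} [Fintype κ]

theorem norm_sum_smul_sq_le (t : κ → 𝕜) (v : κ → E) :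
    ‖∑ i, t i • v i‖ ^ 2 ≤ ∑ i, ∑ j, ‖t i‖ * ‖t j‖ * ‖inner 𝕜 (v i) (v j)‖ := by
  calc ‖∑ i, t i • v i‖ ^ 2 = ‖inner 𝕜 (∑ i, t i • v i) (∑ j, t j • v j)‖ := by
        rw [inner_self_eq_norm_sq_to_K, norm_pow, RCLike.norm_ofReal, abs_norm]
    _ = ‖∑ i, ∑ j, (starRingEnd 𝕜) (t i) * (t j * inner 𝕜 (v i) (v j))‖ := by
        simp_rw [sum_inner, inner_smul_left, inner_sum, inner_smul_right, mul_sum]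
    _ ≤ ∑ i, ∑ j, ‖t i‖ * ‖t j‖ * ‖inner 𝕜 (v i) (v j)‖ := by
        refine (norm_sum_le _ _).trans (sum_le_sum fun i _ => (norm_sum_le _ _).trans_eq ?_)
        simp only [norm_mul, RCLike.norm_conj, mul_assoc]

theorem sq_sum_mul_norm_inner_le {a : κ → ℝ} (ha : ∀ i, 0 ≤ a i) (v : κ → E) (u : E) :
    (∑ i, a i * ‖inner 𝕜 (v i) u‖) ^ 2 ≤
      ‖u‖ ^ 2 * ∑ i, ∑ j, a i * a j * ‖inner 𝕜 (v i) (v j)‖ := by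
  -- `tᵢ` has modulus `aᵢ` and the phase of `⟪vᵢ, u⟫` (it is `0` when `⟪vᵢ, u⟫ = 0`).
  set t : κ → 𝕜 := fun i => ((a i / ‖inner 𝕜 (v i) u‖ : ℝ) : 𝕜) * inner 𝕜 (v i) u
  have h_inner : inner 𝕜 (∑ i, t i • v i) u = ((∑ i, a i * ‖inner 𝕜 (v i) u‖ : ℝ) : 𝕜) := by
    simp only [sum_inner, inner_smul_left, t, map_mul, RCLike.conj_ofReal, mul_assoc,
      RCLike.conj_mul, RCLike.ofReal_sum]
    refine sum_congr rfl fun i _ => ?_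
    norm_cast
    rcases eq_or_ne ‖inner 𝕜 (v i) u‖ 0 with h | h
    · simp [h]
    · field_simp
  have h_norm : ∀ i, ‖t i‖ ≤ a i := fun i => by
    rw [norm_mul, RCLike.norm_ofReal, abs_div, abs_norm, abs_of_nonneg (ha i)]
    rcases eq_or_ne ‖inner 𝕜 (v i) u‖ 0 with h | h
    · simp [h, ha i]
    · rw [div_mul_cancel₀ _ h]
  calc (∑ i, a i * ‖inner 𝕜 (v i) u‖) ^ 2 = ‖inner 𝕜 (∑ i, t i • v i) u‖ ^ 2 := by
        rw [h_inner, RCLike.norm_ofReal, sq_abs]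
    _ ≤ (‖∑ i, t i • v i‖ * ‖u‖) ^ 2 := by gcongr; exact norm_inner_le_norm _ _
    _ ≤ ‖u‖ ^ 2 * ∑ i, ∑ j, ‖t i‖ * ‖t j‖ * ‖inner 𝕜 (v i) (v j)‖ := by
        rw [mul_pow, mul_comm]; gcongr; exact norm_sum_smul_sq_le t v
    _ ≤ ‖u‖ ^ 2 * ∑ i, ∑ j, a i * a j * ‖inner 𝕜 (v i) (v j)‖ := by
        gcongr with i _ j _
        · exact (norm_nonneg _).trans (h_norm i)
        · exact h_norm i
        · exact h_norm j

theorem sq_sum_norm_inner_rpow_le {p : ℝ} (hp : 1 ≤ p) (v : κ → E) {u : E} (hu : ‖u‖ ≤ 1) :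
    (∑ i, ‖inner 𝕜 (v i) u‖ ^ (2 * p)) ^ 2 ≤
      ∑ i, ∑ j, (‖inner 𝕜 (v i) (v j)‖ * (‖inner 𝕜 (v i) u‖ * ‖inner 𝕜 (v j) u‖)) ^ p := by
  set c : κ → ℝ := fun i => ‖inner 𝕜 (v i) u‖
  set g : κ → κ → ℝ := fun i j => ‖inner 𝕜 (v i) (v j)‖
  have hc : ∀ i, 0 ≤ c i := fun i => norm_nonneg _
  have h_S : ∑ i, c i ^ (2 * p) = ∑ i, (c i ^ 2) ^ p :=
    sum_congr rfl fun i _ => by rw [Real.rpow_mul (hc i), Real.rpow_two]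
  rw [h_S]
  set S := ∑ i, (c i ^ 2) ^ p
  set A := ∑ i, ∑ j, (g i j * (c i * c j)) ^ p
  have h_bessel : S ^ 2 ≤ ∑ i, ∑ j, g i j * (c i * c j) * (c i ^ 2 * c j ^ 2) ^ (p - 1) := by
    have hu2 : ‖u‖ ^ 2 ≤ 1 := pow_le_one₀ (norm_nonneg u) hu
    calc S ^ 2 = (∑ i, c i * (c i ^ 2) ^ (p - 1) * c i) ^ 2 := by
          congr 1
          refine sum_congr rfl fun i _ => ?_
          rw [mul_right_comm, ← sq, ← Real.rpow_one_add' (sq_nonneg _) (by linarith),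
            add_sub_cancel]
      _ ≤ ‖u‖ ^ 2 * ∑ i, ∑ j, c i * (c i ^ 2) ^ (p - 1) * (c j * (c j ^ 2) ^ (p - 1)) * g i j :=
          sq_sum_mul_norm_inner_le (fun i => by positivity) v u
      _ ≤ ∑ i, ∑ j, c i * (c i ^ 2) ^ (p - 1) * (c j * (c j ^ 2) ^ (p - 1)) * g i j := by
          refine mul_le_of_le_one_left (sum_nonneg fun i _ => sum_nonneg fun j _ => ?_) hu2
          positivity
      _ = ∑ i, ∑ j, g i j * (c i * c j) * (c i ^ 2 * c j ^ 2) ^ (p - 1) := by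
          refine sum_congr rfl fun i _ => sum_congr rfl fun j _ => ?_
          rw [Real.mul_rpow (sq_nonneg _) (sq_nonneg _)]
          ring
  have h_holder : ∑ i, ∑ j, g i j * (c i * c j) * (c i ^ 2 * c j ^ 2) ^ (p - 1) ≤
      A ^ p⁻¹ * (S ^ 2) ^ (1 - p⁻¹) := by
    have := sum_mul_rpow_sub_one_le univ hp (f := fun q : κ × κ => g q.1 q.2 * (c q.1 * c q.2))
      (h := fun q => c q.1 ^ 2 * c q.2 ^ 2) (fun q _ => by positivity) (fun q _ => by positivity)
    simp only [Fintype.sum_prod_type] at this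
    convert this using 3
    rw [sq, sum_mul_sum]
    exact sum_congr rfl fun i _ => sum_congr rfl fun j _ =>
      (Real.mul_rpow (sq_nonneg _) (sq_nonneg _)).symm
  have hA : 0 ≤ A := sum_nonneg fun i _ => sum_nonneg fun j _ => by positivity
  exact le_of_le_rpow_mul_rpow (sq_nonneg S) hA (inv_pos.2 (by linarith)) (h_bessel.trans h_holder)

theorem sum_norm_inner_rpow_le {p M : ℝ} (hp : 1 ≤ p) (hM : 0 ≤ M) (v : κ → E)
    (hv : ∀ i, ∑ j, ‖inner 𝕜 (v i) (v j)‖ ^ p ≤ M) {u : E} (hu : ‖u‖ ≤ 1) :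
    ∑ i, ‖inner 𝕜 (v i) u‖ ^ (2 * p) ≤ M := by
  set c : κ → ℝ := fun i => ‖inner 𝕜 (v i) u‖
  have hc : ∀ i, 0 ≤ c i := fun i => norm_nonneg _
  set S := ∑ i, c i ^ (2 * p)
  have h_schur : ∑ i, ∑ j, (‖inner 𝕜 (v i) (v j)‖ * (c i * c j)) ^ p ≤ M * S := by
    have := sum_sum_mul_mul_le_of_sum_le (h := fun i j => ‖inner 𝕜 (v i) (v j)‖ ^ p)
      (fun i j => by positivity) (fun i j => by rw [norm_inner_symm]) hv (fun i => c i ^ p)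
    convert this using 1
    · exact sum_congr rfl fun i _ => sum_congr rfl fun j _ => by
        rw [Real.mul_rpow (norm_nonneg _) (mul_nonneg (hc i) (hc j)), Real.mul_rpow (hc i) (hc j)]
    · simp only [S, ← Real.rpow_mul_natCast (hc _), mul_comm (2 : ℝ) p, Nat.cast_ofNat]
  have h_sq : S ^ 2 ≤ M * S := (sq_sum_norm_inner_rpow_le hp v hu).trans h_schur
  have hS : 0 ≤ S := sum_nonneg fun i _ => Real.rpow_nonneg (hc i) _
  rcases hS.eq_or_lt with h | h
  · rw [← h]; exact hM
  · nlinarith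

end InnerProductSpace

theorem bracket_rpow_le {κ : Type*} [Fintype κ] (S : κ → TensorSpace ι) {p B : ℝ} (hp : 0 < p)
    (hB : 0 ≤ B) (h : ∀ u : TensorSpace ι, IsPure u → ‖u‖ = 1 →
      ∑ i, ‖(inner ℂ (S i) u : ℂ)‖ ^ p ≤ B) :
    bracket S p ^ p ≤ B := by
  have h_le : bracket S p ≤ B ^ p⁻¹ := by
    refine Real.sSup_le ?_ (Real.rpow_nonneg hB _)
    rintro _ ⟨u, hu_pure, hu_norm, rfl⟩
    rw [one_div]
    exact Real.rpow_le_rpow (sum_nonneg fun i _ => by positivity) (h u hu_pure hu_norm)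
      (by positivity)
  have h_nonneg : 0 ≤ bracket S p := by
    refine Real.sSup_nonneg ?_
    rintro _ ⟨u, -, -, rfl⟩
    positivity
  exact (Real.le_rpow_inv_iff_of_pos h_nonneg hB hp).mp h_le

theorem mu_nonneg {κ : Type*} [Fintype κ] [DecidableEq κ] (v : κ → TensorSpace ι) (p : ℝ) :
    0 ≤ mu v p := by
  refine Real.sSup_nonneg ?_
  rintro _ ⟨i, rfl⟩
  exact Real.rpow_nonneg (sum_nonneg fun j _ => by positivity) _

theorem sum_erase_norm_inner_rpow_le_mu_rpow {κ : Type*} [Fintype κ] [DecidableEq κ]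
    (v : κ → TensorSpace ι) {p : ℝ} (hp : 0 < p) (i : κ) :
    ∑ j ∈ univ.erase i, ‖(inner ℂ (v i) (v j) : ℂ)‖ ^ p ≤ mu v p ^ p := by
  set F : κ → ℝ := fun k => (∑ j ∈ univ.erase k, ‖(inner ℂ (v k) (v j) : ℂ)‖ ^ p) ^ (1 / p)
  have h_le : F i ≤ mu v p := by
    refine le_csSup ((Set.finite_range F).bddAbove.mono ?_) ⟨i, rfl⟩
    rintro _ ⟨k, rfl⟩
    exact ⟨k, rfl⟩
  simp only [F, one_div] at h_le
  have h_sum : 0 ≤ ∑ j ∈ univ.erase i, ‖(inner ℂ (v i) (v j) : ℂ)‖ ^ p :=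
    sum_nonneg fun j _ => by positivity
  exact (Real.rpow_inv_le_iff_of_pos h_sum (mu_nonneg v p) hp).mp h_le

theorem bracket_pow_le_mu_pow_add_one_general {d r : ℕ} {ι : Fin d → Type*} [∀ e, Fintype (ι e)]
    (α : ℝ) (hα : 1 ≤ α)
    (v : Fin r → TensorSpace ι) (hunit : ∀ i, ‖v i‖ = 1) :
    bracket v (2 * α) ^ (2 * α) ≤ mu v α ^ α + 1 := by
  have hα0 : 0 < α := by linarith
  have h_row (i : Fin r) : ∑ j, ‖(inner ℂ (v i) (v j) : ℂ)‖ ^ α ≤ mu v α ^ α + 1 := by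
    rw [← add_sum_erase _ _ (mem_univ i), inner_self_eq_norm_sq_to_K, hunit i]
    simp only [one_pow, RCLike.ofReal_one, norm_one, Real.one_rpow]
    linarith [sum_erase_norm_inner_rpow_le_mu_rpow v hα0 i]
  have hB : 0 ≤ mu v α ^ α + 1 := by have := mu_nonneg v α; positivity
  exact bracket_rpow_le v (by positivity) hB fun u _ hu =>
    sum_norm_inner_rpow_le hα hB v h_row hu.le

/-- **Proposition 3.5.** For an `r`-tuple `v = (v₁, …, v_r)` of pure tensors of unit length
and `α ≥ 1` we have `[v]_{2α}^{2α} ≤ μ_α(v)^α + 1`. -/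
theorem bracket_pow_le_mu_pow_add_one {d r : ℕ} {ι : Fin d → Type*} [∀ e, Fintype (ι e)]
    (α : ℝ) (hα : 1 ≤ α)
    (v : Fin r → TensorSpace ι) (hpure : ∀ i, IsPure (v i)) (hunit : ∀ i, ‖v i‖ = 1) :
    bracket v (2 * α) ^ (2 * α) ≤ mu v α ^ α + 1 :=
  bracket_pow_le_mu_pow_add_one_general α hα v hunit
end
end
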